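/- arXiv:1507.08077 — 14 statements merged into one kernel-verified Lean document; each statement's English description precedes it below -/
import Mathlib

section
/- Let c₁, c₂ ≥ 0 and τ̲, τ̄ be constants with τ̄ ≥ τ̲ ≥ max{√(1 + 2c₂), 1 + c₁}. Let u† ∈ U satisfy Ku† = g, let ū ∈ U be a global minimizer of J over U, and let u_h ∈ U and r_h ∈ ℝ (the discrete residual norm) satisfy: (i) τ̲δ ≤ r_h ≤ τ̄δ; (ii) |r_h − ‖Kū − g^δ‖_G| ≤ c₁δ; (iii) (1/2)r_h² + R(u_h) − J(ū) ≤ c₂δ². Then R(ū) ≤ R(u†), R(u_h) ≤ R(u†), and ‖Kū − g^δ‖_G ≤ (τ̄ + c₁)δ. -/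
/-- Convergence of adaptively discretized Tikhonov regularization
(Proposition on the discrepancy principle with inexact discrete quantities). -/
theorem stmt_0
    {U G : Type*} [NormedAddCommGroup U] [NormedSpace ℝ U]
    [NormedAddCommGroup G] [InnerProductSpace ℝ G] [CompleteSpace G]
    (K : U →L[ℝ] G) (R : U → ℝ) (δ : ℝ) (hδ : 0 < δ)
    (g gδ : G) (hnoise : ‖g - gδ‖ ≤ δ)
    (J : U → ℝ) (hJ : ∀ u, J u = (1/2) * ‖K u - gδ‖^2 + R u)
    (c₁ c₂ τmin τmax : ℝ) (hc₁ : 0 ≤ c₁) (hc₂ : 0 ≤ c₂)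
    (hττ : τmin ≤ τmax)
    (hτ : max (Real.sqrt (1 + 2*c₂)) (1 + c₁) ≤ τmin)
    (udag : U) (hudag : K udag = g)
    (ubar : U) (hmin : ∀ u : U, J ubar ≤ J u)
    (uh : U) (rh : ℝ)
    (hrh₁ : τmin * δ ≤ rh) (hrh₂ : rh ≤ τmax * δ)
    (hres : |rh - ‖K ubar - gδ‖| ≤ c₁ * δ)
    (hcost : (1/2) * rh^2 + R uh - J ubar ≤ c₂ * δ^2) :
    R ubar ≤ R udag ∧ R uh ≤ R udag ∧ ‖K ubar - gδ‖ ≤ (τmax + c₁) * δ := by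
  have hτ1 : Real.sqrt (1 + 2*c₂) ≤ τmin := le_trans (le_max_left _ _) hτ
  have hτ2 : 1 + c₁ ≤ τmin := le_trans (le_max_right _ _) hτ
  have hτpos : 0 < τmin := lt_of_lt_of_le (by linarith) hτ2
  have hτsq : 1 + 2*c₂ ≤ τmin^2 := by
    have := Real.sq_sqrt (by linarith : (0:ℝ) ≤ 1 + 2*c₂)
    nlinarith [Real.sqrt_nonneg (1 + 2*c₂)]
  -- J(ubar) ≤ (1/2)δ² + R(udag)
  have hJbar : J ubar ≤ (1/2) * δ^2 + R udag := by
    have h1 := hmin udag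
    rw [hJ udag, hudag] at h1
    have h2 : ‖g - gδ‖^2 ≤ δ^2 := by
      nlinarith [norm_nonneg (g - gδ)]
    linarith
  have habs := abs_le.mp hres
  -- ‖Kū−gδ‖ ≥ δ
  have hlow : δ ≤ ‖K ubar - gδ‖ := by nlinarith [habs.1]
  have hJbar' := hJ ubar
  have h1 : R ubar ≤ R udag := by nlinarith [hlow]
  refine ⟨h1, ?_, ?_⟩
  · nlinarith [mul_nonneg (sub_nonneg.mpr hrh₁) (by nlinarith : (0:ℝ) ≤ rh + τmin*δ), sq_nonneg δ]
  · linarith [habs.1, hrh₂]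
end

section
/- Assume φ : U × U → [0, ∞) satisfies λ(1 − λ)φ(u₁, u₂) ≤ λR(u₁) + (1 − λ)R(u₂) − R(λu₁ + (1 − λ)u₂) for all u₁, u₂ ∈ C and all λ ∈ (0, 1), and let ū ∈ C satisfy J(ū) ≤ J(u) for all u ∈ C. Then for every v ∈ C: (1/2)‖K(ū − v)‖_G² + φ(ū, v) ≤ J(v) − J(ū). -/
/-!
The quadratic data term `½‖K u - g^δ‖²` satisfies the modulus inequality with equality for the
modulus `½‖K (u₁ - u₂)‖²`, so `J` satisfies it with modulus `ψ = ½‖K (u₁ - u₂)‖² + φ`. Comparing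
`J ū` with `J` at `λ ū + (1 - λ) v ∈ C` gives `λ (1 - λ) ψ(ū, v) ≤ (1 - λ) (J v - J ū)`; dividing by
`1 - λ` and letting `λ → 1` yields the estimate.
-/

open Set Filter Topology

lemma le_of_forall_mem_Ioo_mul_le {a b : ℝ} (h : ∀ t ∈ Ioo (0 : ℝ) 1, t * a ≤ b) : a ≤ b := by
  have hlim : Tendsto (fun t : ℝ => t * a) (𝓝[<] 1) (𝓝 (1 * a)) :=
    ((continuous_mul_const a).tendsto 1).mono_left nhdsWithin_le_nhds
  rw [one_mul] at hlim
  exact le_of_tendsto hlim (eventually_of_mem (Ioo_mem_nhdsLT zero_lt_one) h)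

lemma modulus_le_sub_of_isMinOn {U : Type*} [AddCommGroup U] [Module ℝ U]
    {C : Set U} (hC : Convex ℝ C) {f : U → ℝ} {ψ : U → U → ℝ}
    (hψ : ∀ u₁ ∈ C, ∀ u₂ ∈ C, ∀ t ∈ Ioo (0 : ℝ) 1,
      t * (1 - t) * ψ u₁ u₂ ≤ t * f u₁ + (1 - t) * f u₂ - f (t • u₁ + (1 - t) • u₂))
    {x : U} (hx : x ∈ C) (hmin : IsMinOn f C x) {v : U} (hv : v ∈ C) :
    ψ x v ≤ f v - f x := by
  refine le_of_forall_mem_Ioo_mul_le fun t ht => ?_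
  have hmem : t • x + (1 - t) • v ∈ C := hC hx hv ht.1.le (by linarith [ht.2]) (by ring)
  have hstep : (1 - t) * (t * ψ x v) ≤ (1 - t) * (f v - f x) := by
    nlinarith [hψ x hx v hv t ht, isMinOn_iff.mp hmin _ hmem]
  exact le_of_mul_le_mul_left hstep (by linarith [ht.2])

lemma norm_smul_add_one_sub_smul_sq {G : Type*} [NormedAddCommGroup G] [InnerProductSpace ℝ G]
    (a b : G) (t : ℝ) :
    ‖t • a + (1 - t) • b‖ ^ 2 =
      t * ‖a‖ ^ 2 + (1 - t) * ‖b‖ ^ 2 - t * (1 - t) * ‖a - b‖ ^ 2 := by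
  simp only [← real_inner_self_eq_norm_sq, inner_add_add_self, inner_sub_sub_self,
    real_inner_smul_left, real_inner_smul_right]
  ring

lemma norm_map_smul_add_one_sub_smul_sub_sq {U G : Type*} [AddCommGroup U] [Module ℝ U]
    [NormedAddCommGroup G] [InnerProductSpace ℝ G] (K : U →ₗ[ℝ] G) (g : G) (u₁ u₂ : U) (t : ℝ) :
    ‖K (t • u₁ + (1 - t) • u₂) - g‖ ^ 2 =
      t * ‖K u₁ - g‖ ^ 2 + (1 - t) * ‖K u₂ - g‖ ^ 2 - t * (1 - t) * ‖K (u₁ - u₂)‖ ^ 2 := by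
  have hsplit : K (t • u₁ + (1 - t) • u₂) - g = t • (K u₁ - g) + (1 - t) • (K u₂ - g) := by
    simp only [map_add, map_smul, smul_sub]
    module
  rw [hsplit, norm_smul_add_one_sub_smul_sq, sub_sub_sub_cancel_right, map_sub]

theorem stmt_1_general
    {U G : Type*} [AddCommGroup U] [Module ℝ U]
    [NormedAddCommGroup G] [InnerProductSpace ℝ G]
    (K : U →ₗ[ℝ] G) (gδ : G) (C : Set U) (hC : Convex ℝ C)
    (R : U → ℝ)
    (J : U → ℝ) (hJ : ∀ u, J u = (1/2) * ‖K u - gδ‖^2 + R u)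
    (φ : U → U → ℝ)
    (hφ : ∀ u₁ ∈ C, ∀ u₂ ∈ C, ∀ lam ∈ Set.Ioo (0:ℝ) 1,
      lam * (1 - lam) * φ u₁ u₂ ≤
        lam * R u₁ + (1 - lam) * R u₂ - R (lam • u₁ + (1 - lam) • u₂))
    (ubar : U) (hubar : ubar ∈ C) (hmin : ∀ u ∈ C, J ubar ≤ J u) :
    ∀ v ∈ C, (1/2) * ‖K (ubar - v)‖^2 + φ ubar v ≤ J v - J ubar := by
  refine fun v hv => modulus_le_sub_of_isMinOn (ψ := fun u₁ u₂ => 1/2 * ‖K (u₁ - u₂)‖^2 + φ u₁ u₂)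
    hC (fun u₁ h₁ u₂ h₂ t ht => ?_) hubar (isMinOn_iff.mpr hmin) hv
  have hdata := norm_map_smul_add_one_sub_smul_sub_sq K gδ u₁ u₂ t
  simp only [hJ]
  linarith [hφ u₁ h₁ u₂ h₂ t ht]

/-- Functional error estimate (lower bound part) for a Tikhonov functional with a
strongly convex-type penalty modulus φ, on a convex constraint set C. -/
theorem stmt_1
    {U G : Type*} [AddCommGroup U] [Module ℝ U]
    [NormedAddCommGroup G] [InnerProductSpace ℝ G]
    (K : U →ₗ[ℝ] G) (gδ : G) (C : Set U) (hC : Convex ℝ C)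
    (R : U → ℝ)
    (J : U → ℝ) (hJ : ∀ u, J u = (1/2) * ‖K u - gδ‖^2 + R u)
    (φ : U → U → ℝ) (hφ0 : ∀ u₁ u₂, 0 ≤ φ u₁ u₂)
    (hφ : ∀ u₁ ∈ C, ∀ u₂ ∈ C, ∀ lam ∈ Set.Ioo (0:ℝ) 1,
      lam * (1 - lam) * φ u₁ u₂ ≤
        lam * R u₁ + (1 - lam) * R u₂ - R (lam • u₁ + (1 - lam) • u₂))
    (ubar : U) (hubar : ubar ∈ C) (hmin : ∀ u ∈ C, J ubar ≤ J u) :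
    ∀ v ∈ C, (1/2) * ‖K (ubar - v)‖^2 + φ ubar v ≤ J v - J ubar :=
  stmt_1_general K gδ C hC R J hJ φ hφ ubar hubar hmin
end

section
/- Let ū be a global minimizer of J_α over U. Then for every u ∈ U and every g ∈ G: α‖u − ū‖_U² + ‖Ku − Kū‖_G² ≤ 2(J_α(u) − J_α(ū)) ≤ (1/α)‖αu + K*(g − g^δ)‖_U² + ‖Ku − g‖_G². -/
open RealInnerProductSpace

/-- Two-sided error estimate for Hilbert-space Tikhonov regularization. -/
theorem stmt_2
    {U G : Type*}
    [NormedAddCommGroup U] [InnerProductSpace ℝ U] [CompleteSpace U]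
    [NormedAddCommGroup G] [InnerProductSpace ℝ G] [CompleteSpace G]
    (K : U →L[ℝ] G) (Kstar : G →L[ℝ] U)
    (hadj : ∀ (u : U) (g : G), ⟪K u, g⟫ = ⟪u, Kstar g⟫)
    (gδ : G) (α : ℝ) (hα : 0 < α)
    (J : U → ℝ) (hJ : ∀ u, J u = (1/2) * ‖K u - gδ‖^2 + (α/2) * ‖u‖^2)
    (ubar : U) (hmin : ∀ u : U, J ubar ≤ J u) :
    ∀ (u : U) (g : G),
      α * ‖u - ubar‖^2 + ‖K u - K ubar‖^2 ≤ 2 * (J u - J ubar) ∧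
      2 * (J u - J ubar) ≤
        (1/α) * ‖α • u + Kstar (g - gδ)‖^2 + ‖K u - g‖^2 := by
  set w : U := α • ubar + Kstar (K ubar - gδ) with hw
  -- expansion identity
  have expand : ∀ x : U, 2 * (J x - J ubar) =
      ‖K x - K ubar‖^2 + α * ‖x - ubar‖^2 + 2 * ⟪w, x - ubar⟫ := by
    intro x
    have e1 : ‖K x - gδ‖^2 = ‖K ubar - gδ‖^2
        + 2 * ⟪K ubar - gδ, K x - K ubar⟫ + ‖K x - K ubar‖^2 := by
      have hKx : K x - gδ = (K ubar - gδ) + (K x - K ubar) := by abel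
      rw [hKx, norm_add_sq_real]
    have e2 : ‖x‖^2 = ‖ubar‖^2 + 2 * ⟪ubar, x - ubar⟫ + ‖x - ubar‖^2 := by
      have hx : x = ubar + (x - ubar) := by abel
      conv_lhs => rw [hx]
      rw [norm_add_sq_real]
    have e3 : ⟪w, x - ubar⟫ = α * ⟪ubar, x - ubar⟫ + ⟪K ubar - gδ, K x - K ubar⟫ := by
      rw [hw, inner_add_left, real_inner_smul_left]
      congr 1
      rw [real_inner_comm, ← hadj, map_sub]
      exact real_inner_comm _ _
    rw [hJ x, hJ ubar]
    linear_combination e1 + α * e2 - 2 * e3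
  -- optimality condition: w = 0
  have hw0 : w = 0 := by
    have key : ∀ t : ℝ, 0 ≤ t^2 * (‖K w‖^2 + α * ‖w‖^2) + 2 * (t * ‖w‖^2) := by
      intro t
      have h1 := hmin (ubar + t • w)
      have h2 := expand (ubar + t • w)
      have h3 : ubar + t • w - ubar = t • w := by abel
      rw [h3] at h2
      have h4 : ⟪w, t • w⟫ = t * ‖w‖^2 := by
        rw [real_inner_smul_right, real_inner_self_eq_norm_sq]
      have h5 : ‖K (ubar + t • w) - K ubar‖^2 = t^2 * ‖K w‖^2 := by
        have : K (ubar + t • w) - K ubar = t • K w := by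
          rw [map_add, map_smul]; abel
        rw [this, norm_smul, mul_pow, Real.norm_eq_abs, sq_abs]
      have h6 : ‖t • w‖^2 = t^2 * ‖w‖^2 := by
        rw [norm_smul, mul_pow, Real.norm_eq_abs, sq_abs]
      rw [h4, h5, h6] at h2
      nlinarith [h1, h2]
    have hq : (0:ℝ) ≤ ‖K w‖^2 + α * ‖w‖^2 := by positivity
    have hc : ‖w‖^2 = 0 := by
      by_contra hc0
      have hcpos : 0 < ‖w‖^2 := lt_of_le_of_ne (by positivity) (Ne.symm hc0)
      set q := ‖K w‖^2 + α * ‖w‖^2 with hqdef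
      have hq1 : (0:ℝ) < q + 1 := by linarith
      have hq1' : (q + 1 : ℝ) ≠ 0 := ne_of_gt hq1
      have ht := key (-(‖w‖^2) / (q + 1))
      have e : (-(‖w‖^2)/(q+1))^2 * q + 2 * ((-(‖w‖^2)/(q+1)) * ‖w‖^2)
          = ((‖w‖^2)^2 * q - 2 * (‖w‖^2)^2 * (q+1)) / (q+1)^2 := by
        field_simp; ring
      rw [e] at ht
      have h3 : 0 ≤ (‖w‖^2)^2 * q - 2 * (‖w‖^2)^2 * (q+1) := by
        have h4 := mul_nonneg ht (sq_nonneg (q+1))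
        rwa [div_mul_cancel₀ _ (by positivity : ((q:ℝ)+1)^2 ≠ 0)] at h4
      nlinarith [hcpos, hq, hq1]
    have : w = 0 := by
      have := real_inner_self_eq_norm_sq w
      have hz : ⟪w, w⟫ = 0 := by rw [this, hc]
      exact inner_self_eq_zero.mp (by exact_mod_cast hz)
    exact this
  intro u g
  have hE : 2 * (J u - J ubar) = ‖K u - K ubar‖^2 + α * ‖u - ubar‖^2 := by
    have := expand u
    rw [hw0, inner_zero_left] at this
    linarith [this]
  constructor
  · linarith [hE]
  · -- rewrite the test vector
    have h0 : α • ubar + Kstar (K ubar - gδ) = 0 := by rw [← hw]; exact hw0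
    have hub : α • ubar = Kstar gδ - Kstar (K ubar) := by
      have h0' : α • ubar + (Kstar (K ubar) - Kstar gδ) = 0 := by
        rw [← map_sub]; exact h0
      have h' : α • ubar = -(Kstar (K ubar) - Kstar gδ) := by
        rwa [add_eq_zero_iff_eq_neg] at h0'
      rw [h']; abel
    have hp : α • u + Kstar (g - gδ) = α • (u - ubar) + Kstar (g - K ubar) := by
      rw [smul_sub, map_sub, map_sub]
      have : α • u - α • ubar + (Kstar g - Kstar (K ubar))
          = α • u - (Kstar gδ - Kstar (K ubar)) + (Kstar g - Kstar (K ubar)) := by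
        rw [hub]
      rw [this]; abel
    have hKug : K u - g = K (u - ubar) - (g - K ubar) := by
      rw [map_sub]; abel
    have n1 : ‖α • (u - ubar) + Kstar (g - K ubar)‖^2
        = α^2 * ‖u - ubar‖^2 + 2 * (α * ⟪K (u - ubar), g - K ubar⟫)
          + ‖Kstar (g - K ubar)‖^2 := by
      rw [norm_add_sq_real, real_inner_smul_left, hadj]
      have : ‖α • (u - ubar)‖^2 = α^2 * ‖u - ubar‖^2 := by
        rw [norm_smul, mul_pow, Real.norm_eq_abs, sq_abs]
      rw [this]
    have hdiv : (1/α) * ‖α • (u - ubar) + Kstar (g - K ubar)‖^2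
        = α * ‖u - ubar‖^2 + 2 * ⟪K (u - ubar), g - K ubar⟫
          + (1/α) * ‖Kstar (g - K ubar)‖^2 := by
      rw [n1]; field_simp
    have n2 : ‖K (u - ubar) - (g - K ubar)‖^2
        = ‖K (u - ubar)‖^2 - 2 * ⟪K (u - ubar), g - K ubar⟫ + ‖g - K ubar‖^2 := by
      rw [norm_sub_sq_real]
    have nK : ‖K u - K ubar‖^2 = ‖K (u - ubar)‖^2 := by rw [map_sub]
    have pos1 : (0:ℝ) ≤ (1/α) * ‖Kstar (g - K ubar)‖^2 := by positivity
    have pos2 : (0:ℝ) ≤ ‖g - K ubar‖^2 := by positivity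
    rw [hE, hp, hKug, hdiv, n2, nK]
    linarith
end

section
/- Let σ and γ be real constants satisfying (σ = 4 and γ ≥ 2) or (σ > 4 and γ > 2σ/(σ + √(σ² − 4σ))). For arbitrary ū_h ∈ U, ȳ_h ∈ Y, w̄_h ∈ W define the residuals ρ_w := C*(Cȳ_h − g^δ) + A*w̄_h ∈ Y*, ρ_u := αū_h − B*w̄_h ∈ U, and ρ_y := Aȳ_h − Bū_h ∈ W*. Then α‖ū_h − ū‖_U² + ‖Cȳ_h − Cȳ‖_G² ≤ (γ/α)‖B*((A*)⁻¹ρ_w) + ρ_u‖_U² + σ‖C(A⁻¹ρ_y)‖_G². -/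
open RealInnerProductSpace NormedSpace

/-! With `S = C A⁻¹ B` and its adjoint `S' = B* (A*)⁻¹ C*`, the minimizer satisfies
`S' (S ū - g^δ) + α ū = 0`. The `w̄_h` terms cancel in the first residual, which becomes
`r = S' (C ȳ_h - g^δ) + α ū_h = S' η + α e` with `e = ū_h - ū`, `η = C ȳ_h - S ū`; the second
residual is `d = C ȳ_h - S ū_h`, and `S e = η - d`. Hence
`α ‖e‖² + ‖η‖² = ⟪r, e⟫ + ⟪η, d⟫`, and Cauchy–Schwarz with Young's inequality gives
`α ‖e‖² + ‖η‖² ≤ α⁻¹ ‖r‖² + ‖d‖²`. Both admissible parameter regimes force `σ, γ ≥ 1`. -/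

section Tikhonov

variable {U G : Type*} [NormedAddCommGroup U] [InnerProductSpace ℝ U]
  [NormedAddCommGroup G] [InnerProductSpace ℝ G]
  (S : U →ₗ[ℝ] G) (S' : G →ₗ[ℝ] U) {α : ℝ} {g : G} {ubar : U}

theorem tikhonov_optimality (hS : ∀ u g, ⟪S u, g⟫ = ⟪u, S' g⟫)
    (hmin : ∀ u, (1/2) * ‖S ubar - g‖^2 + (α/2) * ‖ubar‖^2 ≤
      (1/2) * ‖S u - g‖^2 + (α/2) * ‖u‖^2) :
    S' (S ubar - g) + α • ubar = 0 := by
  generalize hk_def : S' (S ubar - g) + α • ubar = k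
  have hk : ⟪S ubar - g, S k⟫ + α * ⟪ubar, k⟫ = ‖k‖^2 := by
    calc ⟪S ubar - g, S k⟫ + α * ⟪ubar, k⟫ = ⟪S' (S ubar - g) + α • ubar, k⟫ := by
          rw [inner_add_left, real_inner_smul_left, real_inner_comm, hS, real_inner_comm]
      _ = ‖k‖^2 := by rw [hk_def, real_inner_self_eq_norm_sq]
  -- perturbing `ubar` along `k` itself changes the functional by `t * ‖k‖^2 + O(t^2)`
  have hquad : ∀ t : ℝ, 0 ≤ ((1/2) * ‖S k‖^2 + (α/2) * ‖k‖^2) * (t * t) + ‖k‖^2 * t + 0 := by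
    intro t
    have h := hmin (ubar + t • k)
    rw [map_add, map_smul, add_sub_right_comm, norm_add_sq_real, norm_add_sq_real,
      real_inner_smul_right, real_inner_smul_right, norm_smul, norm_smul, mul_pow, mul_pow,
      Real.norm_eq_abs, sq_abs] at h
    linear_combination h + t * hk
  have hdisc : (‖k‖^2)^2 ≤ 0 := by simpa [discrim] using discrim_le_zero hquad
  have hk0 : ‖k‖^2 = 0 := (pow_eq_zero_iff two_ne_zero).mp (le_antisymm hdisc (sq_nonneg _))
  simpa using hk0

theorem tikhonov_error_le_residual (hS : ∀ u g, ⟪S u, g⟫ = ⟪u, S' g⟫) (hα : 0 < α)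
    (hopt : S' (S ubar - g) + α • ubar = 0) (uh : U) (z : G) :
    α * ‖uh - ubar‖^2 + ‖z - S ubar‖^2 ≤ α⁻¹ * ‖S' (z - g) + α • uh‖^2 + ‖z - S uh‖^2 := by
  set e := uh - ubar
  set η := z - S ubar
  set d := z - S uh
  set r := S' (z - g) + α • uh
  have hr : r = S' η + α • e := by
    calc r = S' η + α • e + (S' (S ubar - g) + α • ubar) := by
          simp only [r, η, e, map_sub, smul_sub]; abel
      _ = S' η + α • e := by rw [hopt, add_zero]
  have hSe : S e = η - d := by simp only [e, η, d, map_sub]; abel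
  clear_value e η d r
  have hre : ⟪r, e⟫ + ⟪η, d⟫ = α * ‖e‖^2 + ‖η‖^2 := by
    rw [hr, inner_add_left, real_inner_smul_left, real_inner_self_eq_norm_sq, real_inner_comm,
      ← hS, hSe, inner_sub_left, real_inner_self_eq_norm_sq, real_inner_comm d]
    ring
  have hre_le : ⟪r, e⟫ ≤ ‖r‖ * ‖e‖ := real_inner_le_norm r e
  have hηd_le : ⟪η, d⟫ ≤ ‖η‖ * ‖d‖ := real_inner_le_norm η d
  have hyoung : ‖r‖ * ‖e‖ ≤ α⁻¹ * ‖r‖^2 / 2 + α * ‖e‖^2 / 2 := by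
    have hsq : α * (α⁻¹ * ‖r‖ - ‖e‖)^2 = α⁻¹ * ‖r‖^2 - 2 * (‖r‖ * ‖e‖) + α * ‖e‖^2 := by
      field_simp; ring
    linarith [mul_nonneg hα.le (sq_nonneg (α⁻¹ * ‖r‖ - ‖e‖))]
  linarith [two_mul_le_add_sq ‖η‖ ‖d‖]

end Tikhonov

theorem one_le_two_mul_div_add_sqrt {σ : ℝ} (hσ : 0 < σ) :
    1 ≤ 2 * σ / (σ + √(σ^2 - 4*σ)) := by
  have hsqrt : √(σ^2 - 4*σ) ≤ σ := Real.sqrt_le_iff.mpr ⟨hσ.le, by linarith⟩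
  rw [le_div_iff₀ (by positivity)]
  linarith

theorem one_le_of_admissible_params {σ γ : ℝ}
    (h : (σ = 4 ∧ 2 ≤ γ) ∨ (4 < σ ∧ 2 * σ / (σ + √(σ^2 - 4*σ)) < γ)) : 1 ≤ σ ∧ 1 ≤ γ := by
  rcases h with ⟨rfl, hγ⟩ | ⟨hσ, hγ⟩
  · constructor <;> linarith
  · constructor <;> linarith [one_le_two_mul_div_add_sqrt (by linarith : 0 < σ)]

theorem stmt_3_general
    {U G Y W : Type*}
    [NormedAddCommGroup U] [InnerProductSpace ℝ U]
    [NormedAddCommGroup G] [InnerProductSpace ℝ G]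
    [NormedAddCommGroup Y] [NormedSpace ℝ Y]
    [NormedAddCommGroup W] [NormedSpace ℝ W]
    (A : Y ≃L[ℝ] StrongDual ℝ W) (Astar : W ≃L[ℝ] StrongDual ℝ Y)
    (hAadj : ∀ (y : Y) (w : W), A y w = Astar w y)
    (B : U →L[ℝ] StrongDual ℝ W) (Bstar : W →L[ℝ] U)
    (hBadj : ∀ (u : U) (w : W), B u w = ⟪u, Bstar w⟫)
    (C : Y →L[ℝ] G) (Cstar : G →L[ℝ] StrongDual ℝ Y)
    (hCadj : ∀ (y : Y) (g : G), ⟪C y, g⟫ = Cstar g y)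
    (gδ : G) (α : ℝ) (hα : 0 < α)
    (Jα : U → Y → ℝ)
    (hJ : ∀ u y, Jα u y = (1/2) * ‖C y - gδ‖^2 + (α/2) * ‖u‖^2)
    (ubar : U) (ybar : Y) (hybar : ybar = A.symm (B ubar))
    (hmin : ∀ u : U, Jα ubar ybar ≤ Jα u (A.symm (B u)))
    (σ γ : ℝ)
    (hσγ : (σ = 4 ∧ 2 ≤ γ) ∨
      (4 < σ ∧ 2 * σ / (σ + Real.sqrt (σ^2 - 4*σ)) < γ))
    (uh : U) (yh : Y) (wh : W) :
    α * ‖uh - ubar‖^2 + ‖C yh - C ybar‖^2 ≤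
      (γ/α) * ‖Bstar (Astar.symm (Cstar (C yh - gδ) + Astar wh)) + (α • uh - Bstar wh)‖^2
      + σ * ‖C (A.symm (A yh - B uh))‖^2 := by
  let S : U →ₗ[ℝ] G := C.toLinearMap ∘ₗ A.symm.toLinearMap ∘ₗ B.toLinearMap
  let S' : G →ₗ[ℝ] U := Bstar.toLinearMap ∘ₗ Astar.symm.toLinearMap ∘ₗ Cstar.toLinearMap
  have hS : ∀ u g, ⟪C (A.symm (B u)), g⟫ = ⟪u, Bstar (Astar.symm (Cstar g))⟫ := fun u g => by
    rw [hCadj, ← Astar.apply_symm_apply (Cstar g), ← hAadj, A.apply_symm_apply, hBadj,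
      Astar.apply_symm_apply]
  have hopt : S' (S ubar - gδ) + α • ubar = 0 :=
    tikhonov_optimality S S' hS fun u => by
      have h := hmin u; rw [hJ, hJ, hybar] at h; exact h
  have hresidual : Bstar (Astar.symm (Cstar (C yh - gδ) + Astar wh)) + (α • uh - Bstar wh)
      = S' (C yh - gδ) + α • uh := by
    simp [S']
  have hstate : C (A.symm (A yh - B uh)) = C yh - S uh := by simp [S]
  obtain ⟨hσ, hγ⟩ := one_le_of_admissible_params hσγ
  rw [hresidual, hstate]
  calc α * ‖uh - ubar‖^2 + ‖C yh - C ybar‖^2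
      ≤ α⁻¹ * ‖S' (C yh - gδ) + α • uh‖^2 + ‖C yh - S uh‖^2 := by
        rw [hybar]; exact tikhonov_error_le_residual S S' hS hα hopt uh (C yh)
    _ ≤ (γ/α) * ‖S' (C yh - gδ) + α • uh‖^2 + σ * ‖C yh - S uh‖^2 := by
        gcongr ?_ * _ + ?_
        · rw [inv_eq_one_div]; gcongr
        · exact le_mul_of_one_le_left (sq_nonneg _) hσ

/-- A posteriori error estimate for Hilbert-space Tikhonov regularization of a
PDE-constrained problem, in terms of the residuals of the optimality system. -/
theorem stmt_3
    {U G Y W : Type*}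
    [NormedAddCommGroup U] [InnerProductSpace ℝ U] [CompleteSpace U]
    [NormedAddCommGroup G] [InnerProductSpace ℝ G] [CompleteSpace G]
    [NormedAddCommGroup Y] [NormedSpace ℝ Y] [CompleteSpace Y]
    [NormedAddCommGroup W] [NormedSpace ℝ W] [CompleteSpace W]
    (A : Y ≃L[ℝ] StrongDual ℝ W) (Astar : W ≃L[ℝ] StrongDual ℝ Y)
    (hAadj : ∀ (y : Y) (w : W), A y w = Astar w y)
    (B : U →L[ℝ] StrongDual ℝ W) (Bstar : W →L[ℝ] U)
    (hBadj : ∀ (u : U) (w : W), B u w = ⟪u, Bstar w⟫)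
    (C : Y →L[ℝ] G) (Cstar : G →L[ℝ] StrongDual ℝ Y)
    (hCadj : ∀ (y : Y) (g : G), ⟪C y, g⟫ = Cstar g y)
    (gδ : G) (α : ℝ) (hα : 0 < α)
    (Jα : U → Y → ℝ)
    (hJ : ∀ u y, Jα u y = (1/2) * ‖C y - gδ‖^2 + (α/2) * ‖u‖^2)
    (ubar : U) (ybar : Y) (hybar : ybar = A.symm (B ubar))
    (hmin : ∀ u : U, Jα ubar ybar ≤ Jα u (A.symm (B u)))
    (σ γ : ℝ)
    (hσγ : (σ = 4 ∧ 2 ≤ γ) ∨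
      (4 < σ ∧ 2 * σ / (σ + Real.sqrt (σ^2 - 4*σ)) < γ))
    (uh : U) (yh : Y) (wh : W) :
    α * ‖uh - ubar‖^2 + ‖C yh - C ybar‖^2 ≤
      (γ/α) * ‖Bstar (Astar.symm (Cstar (C yh - gδ) + Astar wh)) + (α • uh - Bstar wh)‖^2
      + σ * ‖C (A.symm (A yh - B uh))‖^2 :=
  stmt_3_general A Astar hAadj B Bstar hBadj C Cstar hCadj gδ α hα Jα hJ ubar ybar hybar hmin σ γ
    hσγ uh yh wh
end

section
/- For arbitrary ū_h ∈ U, ȳ_h ∈ Y, w̄_h ∈ W define the residuals ρ_w := C*(Cȳ_h − g^δ) + A*w̄_h ∈ Y*, ρ_u := αū_h − B*w̄_h ∈ U, and ρ_y := Aȳ_h − Bū_h ∈ W*. Then J_α(ū_h, ȳ_h) − J_α(ū, ȳ) ≤ (1/(2α))‖B*((A*)⁻¹ρ_w) + ρ_u‖_U² + (Cȳ_h − g^δ, C(A⁻¹ρ_y))_G. -/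
open RealInnerProductSpace NormedSpace

/-!
The reduced functional `f u = ½‖T u - g^δ‖² + (α/2)‖u‖²`, with `T = C A⁻¹ B` and adjoint
`T* = B* (A*)⁻¹ C*`, is bounded below by the Fenchel dual value
`D(a) = -⟪a, g^δ⟫ - ½‖a‖² - ‖T* a‖² / (2α)` at every `a ∈ G` (weak duality, i.e. two
Peter–Paul inequalities). Since `ρ_w = C*a + A* w̄_h` with `a = C ȳ_h - g^δ` gives
`B*((A*)⁻¹ ρ_w) + ρ_u = T* a + α ū_h`, expanding the right-hand side shows that it equals
`J_α(ū_h, ȳ_h) - D(a)`, so the estimate is `D(a) ≤ f(ū)`.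
-/

section WeakDuality

variable {U G : Type*} [NormedAddCommGroup U] [InnerProductSpace ℝ U]
  [NormedAddCommGroup G] [InnerProductSpace ℝ G]

theorem real_inner_le_mul_norm_sq_add_norm_sq_div {ε : ℝ} (hε : 0 < ε) (x y : U) :
    ⟪x, y⟫ ≤ ε / 2 * ‖x‖ ^ 2 + ‖y‖ ^ 2 / (2 * ε) := by
  have hsq : ε / 2 * ‖x‖ ^ 2 + ‖y‖ ^ 2 / (2 * ε) - ⟪x, y⟫ = ‖ε • x - y‖ ^ 2 / (2 * ε) := by
    rw [norm_sub_sq_real, norm_smul, Real.norm_of_nonneg hε.le, real_inner_smul_left]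
    field_simp
    ring
  have : 0 ≤ ‖ε • x - y‖ ^ 2 / (2 * ε) := by positivity
  linarith

theorem neg_dual_le_tikhonov {T : U → G} {S : G → U} (hTS : ∀ u g, ⟪T u, g⟫ = ⟪u, S g⟫)
    {α : ℝ} (hα : 0 < α) (c a : G) (u : U) :
    -⟪a, c⟫ - ‖a‖ ^ 2 / 2 - ‖S a‖ ^ 2 / (2 * α) ≤ ‖T u - c‖ ^ 2 / 2 + α / 2 * ‖u‖ ^ 2 := by
  have hdata := real_inner_le_mul_norm_sq_add_norm_sq_div one_pos (T u - c) a
  have hreg := real_inner_le_mul_norm_sq_add_norm_sq_div hα u (-S a)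
  rw [inner_sub_left, hTS, real_inner_comm a c] at hdata
  rw [inner_neg_right, norm_neg] at hreg
  linarith

end WeakDuality

section Residuals

variable {U G Y W : Type*}
  [NormedAddCommGroup U] [InnerProductSpace ℝ U] [NormedAddCommGroup G] [InnerProductSpace ℝ G]
  [NormedAddCommGroup Y] [NormedSpace ℝ Y] [NormedAddCommGroup W] [NormedSpace ℝ W]
  {A : Y ≃L[ℝ] StrongDual ℝ W} {Astar : W ≃L[ℝ] StrongDual ℝ Y}
  {B : U →L[ℝ] StrongDual ℝ W} {Bstar : W →L[ℝ] U}
  {C : Y →L[ℝ] G} {Cstar : G →L[ℝ] StrongDual ℝ Y}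

theorem inner_reduced_eq_inner_reduced_adjoint (hAadj : ∀ (y : Y) (w : W), A y w = Astar w y)
    (hBadj : ∀ (u : U) (w : W), B u w = ⟪u, Bstar w⟫)
    (hCadj : ∀ (y : Y) (g : G), ⟪C y, g⟫ = Cstar g y) (u : U) (g : G) :
    ⟪C (A.symm (B u)), g⟫ = ⟪u, Bstar (Astar.symm (Cstar g))⟫ := by
  have h := hAadj (A.symm (B u)) (Astar.symm (Cstar g))
  rw [A.apply_symm_apply, Astar.apply_symm_apply] at h
  rw [hCadj, ← h, hBadj]

theorem adjoint_residual_add_control_residual (α : ℝ) (a : G) (uh : U) (wh : W) :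
    Bstar (Astar.symm (Cstar a + Astar wh)) + (α • uh - Bstar wh)
      = Bstar (Astar.symm (Cstar a)) + α • uh := by
  rw [map_add, Astar.symm_apply_apply, map_add]
  abel

theorem observed_state_residual (yh : Y) (uh : U) :
    C (A.symm (A yh - B uh)) = C yh - C (A.symm (B uh)) := by
  rw [map_sub, A.symm_apply_apply, map_sub]

end Residuals

theorem stmt_4_general
    {U G Y W : Type*}
    [NormedAddCommGroup U] [InnerProductSpace ℝ U]
    [NormedAddCommGroup G] [InnerProductSpace ℝ G]
    [NormedAddCommGroup Y] [NormedSpace ℝ Y]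
    [NormedAddCommGroup W] [NormedSpace ℝ W]
    (A : Y ≃L[ℝ] StrongDual ℝ W) (Astar : W ≃L[ℝ] StrongDual ℝ Y)
    (hAadj : ∀ (y : Y) (w : W), A y w = Astar w y)
    (B : U →L[ℝ] StrongDual ℝ W) (Bstar : W →L[ℝ] U)
    (hBadj : ∀ (u : U) (w : W), B u w = ⟪u, Bstar w⟫)
    (C : Y →L[ℝ] G) (Cstar : G →L[ℝ] StrongDual ℝ Y)
    (hCadj : ∀ (y : Y) (g : G), ⟪C y, g⟫ = Cstar g y)
    (gδ : G) (α : ℝ) (hα : 0 < α)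
    (Jα : U → Y → ℝ)
    (hJ : ∀ u y, Jα u y = (1/2) * ‖C y - gδ‖^2 + (α/2) * ‖u‖^2)
    (ubar : U) (ybar : Y) (hybar : ybar = A.symm (B ubar))
    (uh : U) (yh : Y) (wh : W) :
    Jα uh yh - Jα ubar ybar ≤
      (1/(2*α)) * ‖Bstar (Astar.symm (Cstar (C yh - gδ) + Astar wh)) + (α • uh - Bstar wh)‖^2
      + ⟪C yh - gδ, C (A.symm (A yh - B uh))⟫ := by
  have hadj := inner_reduced_eq_inner_reduced_adjoint hAadj hBadj hCadj
  have hdual := neg_dual_le_tikhonov hadj hα gδ (C yh - gδ) ubar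
  rw [hJ, hJ, hybar, adjoint_residual_add_control_residual, observed_state_residual]
  set a := C yh - gδ
  set T : U → G := fun u => C (A.symm (B u))
  set Sa := Bstar (Astar.symm (Cstar a))
  have hresidual : ‖Sa + α • uh‖ ^ 2 = ‖Sa‖ ^ 2 + 2 * α * ⟪a, T uh⟫ + α ^ 2 * ‖uh‖ ^ 2 := by
    rw [norm_add_sq_real, norm_smul, Real.norm_of_nonneg hα.le, real_inner_smul_right,
      real_inner_comm uh Sa, ← hadj uh a, real_inner_comm]
    ring
  have hstate : ⟪a, C yh - T uh⟫ = ‖a‖ ^ 2 + ⟪a, gδ⟫ - ⟪a, T uh⟫ := by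
    rw [show C yh - T uh = a + gδ - T uh by simp [a], inner_sub_right, inner_add_right,
      real_inner_self_eq_norm_sq]
  have hscale : 1 / (2 * α) * (‖Sa‖ ^ 2 + 2 * α * ⟪a, T uh⟫ + α ^ 2 * ‖uh‖ ^ 2)
      = ‖Sa‖ ^ 2 / (2 * α) + ⟪a, T uh⟫ + α / 2 * ‖uh‖ ^ 2 := by
    field_simp
  rw [hresidual, hstate, hscale]
  linarith

/-- A posteriori estimate for the Tikhonov functional value error for Hilbert-space
regularization of a PDE-constrained problem. -/
theorem stmt_4
    {U G Y W : Type*}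
    [NormedAddCommGroup U] [InnerProductSpace ℝ U] [CompleteSpace U]
    [NormedAddCommGroup G] [InnerProductSpace ℝ G] [CompleteSpace G]
    [NormedAddCommGroup Y] [NormedSpace ℝ Y] [CompleteSpace Y]
    [NormedAddCommGroup W] [NormedSpace ℝ W] [CompleteSpace W]
    (A : Y ≃L[ℝ] StrongDual ℝ W) (Astar : W ≃L[ℝ] StrongDual ℝ Y)
    (hAadj : ∀ (y : Y) (w : W), A y w = Astar w y)
    (B : U →L[ℝ] StrongDual ℝ W) (Bstar : W →L[ℝ] U)
    (hBadj : ∀ (u : U) (w : W), B u w = ⟪u, Bstar w⟫)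
    (C : Y →L[ℝ] G) (Cstar : G →L[ℝ] StrongDual ℝ Y)
    (hCadj : ∀ (y : Y) (g : G), ⟪C y, g⟫ = Cstar g y)
    (gδ : G) (α : ℝ) (hα : 0 < α)
    (Jα : U → Y → ℝ)
    (hJ : ∀ u y, Jα u y = (1/2) * ‖C y - gδ‖^2 + (α/2) * ‖u‖^2)
    (ubar : U) (ybar : Y) (hybar : ybar = A.symm (B ubar))
    (hmin : ∀ u : U, Jα ubar ybar ≤ Jα u (A.symm (B u)))
    (uh : U) (yh : Y) (wh : W) :
    Jα uh yh - Jα ubar ybar ≤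
      (1/(2*α)) * ‖Bstar (Astar.symm (Cstar (C yh - gδ) + Astar wh)) + (α • uh - Bstar wh)‖^2
      + ⟪C yh - gδ, C (A.symm (A yh - B uh))⟫ :=
  stmt_4_general A Astar hAadj B Bstar hBadj C Cstar hCadj gδ α hα Jα hJ ubar ybar hybar uh yh wh
end

section
/- Let ū ∈ U with ‖ū‖_{X*} ≤ 1/α minimize u ↦ (1/2)‖Ku − g^δ‖_G² over the ball {u ∈ U : ‖u‖_{X*} ≤ 1/α}. Then for every u ∈ U with ‖u‖_{X*} ≤ 1/α and every g ∈ G: ‖Ku − Kū‖_G² ≤ ‖Ku − g^δ‖_G² − ‖Kū − g^δ‖_G² ≤ (2/α)‖K*(g − g^δ)‖_X + 2·u(K*(g − g^δ)) + ‖Ku − g‖_G². -/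
/-!
`K ū` is the point of the convex set `K {‖u‖ ≤ 1/α}` nearest to `gδ`, so the angle at `K ū`
between any other point `K u` of that set and `gδ` is obtuse; expanding
`‖K u - gδ‖² = ‖K u - K ū‖² + 2⟪K u - K ū, K ū - gδ⟫ + ‖K ū - gδ‖²` gives the first estimate.
For the second, re-centre both squared distances at `g`: the cross term is
`2⟪K u - K ū, g - gδ⟫ = 2 (u - ū)(K* (g - gδ))`, and `-ū(K* (g - gδ)) ≤ ‖K* (g - gδ)‖ / α`.
-/

open RealInnerProductSpace NormedSpace

section Projection

variable {F : Type*} [NormedAddCommGroup F] [InnerProductSpace ℝ F]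

theorem real_inner_sub_nonneg_of_isMinOn_norm_sub {C : Set F} (hC : Convex ℝ C) {p y z : F}
    (hy : y ∈ C) (hmin : IsMinOn (‖· - p‖) C y) (hz : z ∈ C) :
    0 ≤ ⟪z - y, y - p⟫ := by
  have hdist : IsMinOn (‖p - ·‖) C y := fun w hw => by
    simpa only [norm_sub_rev p] using hmin hw
  have hinner := (norm_eq_iInf_iff_real_inner_le_zero hC hy).1 (hdist.iInf_eq hy).symm z hz
  rw [real_inner_comm, ← neg_sub y p, inner_neg_right] at hinner
  linarith

theorem norm_sub_sq_le_of_isMinOn_norm_sub {C : Set F} (hC : Convex ℝ C) {p y z : F}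
    (hy : y ∈ C) (hmin : IsMinOn (‖· - p‖) C y) (hz : z ∈ C) :
    ‖z - y‖ ^ 2 ≤ ‖z - p‖ ^ 2 - ‖y - p‖ ^ 2 := by
  have hinner := real_inner_sub_nonneg_of_isMinOn_norm_sub hC hy hmin hz
  have hexpand : ‖z - p‖ ^ 2 = ‖z - y‖ ^ 2 + 2 * ⟪z - y, y - p⟫ + ‖y - p‖ ^ 2 := by
    rw [← norm_add_sq_real, sub_add_sub_cancel]
  linarith

theorem norm_sub_sq_sub_norm_sub_sq_eq (a b c d : F) :
    ‖a - c‖ ^ 2 - ‖b - c‖ ^ 2 = ‖a - d‖ ^ 2 - ‖b - d‖ ^ 2 + 2 * ⟪a - b, d - c⟫ := by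
  rw [← sub_sub_sub_cancel_right a b d, inner_sub_left, ← sub_add_sub_cancel a d c,
    ← sub_add_sub_cancel b d c, norm_add_sq_real, norm_add_sq_real]
  ring

end Projection

theorem ContinuousLinearMap.neg_apply_le_of_opNorm_le {E : Type*} [SeminormedAddCommGroup E]
    [NormedSpace ℝ E] {f : StrongDual ℝ E} {r : ℝ} (hf : ‖f‖ ≤ r) (x : E) :
    -f x ≤ r * ‖x‖ :=
  (neg_le_abs _).trans (f.le_of_opNorm_le hf x)

theorem stmt_5_general
    {X G : Type*}
    [NormedAddCommGroup X] [NormedSpace ℝ X]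
    [NormedAddCommGroup G] [InnerProductSpace ℝ G]
    (K : StrongDual ℝ X →L[ℝ] G) (Kstar : G →L[ℝ] X)
    (hadj : ∀ (u : StrongDual ℝ X) (g : G), ⟪K u, g⟫ = u (Kstar g))
    (gδ : G) (α : ℝ)
    (ubar : StrongDual ℝ X) (hubar : ‖ubar‖ ≤ 1/α)
    (hmin : ∀ u : StrongDual ℝ X, ‖u‖ ≤ 1/α →
      (1/2) * ‖K ubar - gδ‖^2 ≤ (1/2) * ‖K u - gδ‖^2) :
    ∀ u : StrongDual ℝ X, ‖u‖ ≤ 1/α → ∀ g : G,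
      ‖K u - K ubar‖^2 ≤ ‖K u - gδ‖^2 - ‖K ubar - gδ‖^2 ∧
      ‖K u - gδ‖^2 - ‖K ubar - gδ‖^2 ≤
        (2/α) * ‖Kstar (g - gδ)‖ + 2 * u (Kstar (g - gδ)) + ‖K u - g‖^2 := by
  intro u hu g
  set C : Set G := K '' Metric.closedBall 0 (1/α)
  have hC : Convex ℝ C := (convex_closedBall 0 (1/α)).linear_image K.toLinearMap
  have hmem {v : StrongDual ℝ X} (hv : ‖v‖ ≤ 1/α) : K v ∈ C :=
    ⟨v, mem_closedBall_zero_iff.2 hv, rfl⟩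
  have hKubar : IsMinOn (‖· - gδ‖) C (K ubar) := by
    refine isMinOn_iff.2 ?_
    rintro _ ⟨v, hv, rfl⟩
    have hsq := hmin v (mem_closedBall_zero_iff.1 hv)
    exact (pow_le_pow_iff_left₀ (norm_nonneg _) (norm_nonneg _) two_ne_zero).1 (by linarith)
  refine ⟨norm_sub_sq_le_of_isMinOn_norm_sub hC (hmem hubar) hKubar (hmem hu), ?_⟩
  have hpair : ⟪K u - K ubar, g - gδ⟫ = u (Kstar (g - gδ)) - ubar (Kstar (g - gδ)) := by
    rw [inner_sub_left, hadj, hadj]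
  have hubar_bound := ContinuousLinearMap.neg_apply_le_of_opNorm_le hubar (Kstar (g - gδ))
  rw [norm_sub_sq_sub_norm_sub_sq_eq _ _ gδ g, hpair]
  have hdiv : (2/α) * ‖Kstar (g - gδ)‖ = 2 * ((1/α) * ‖Kstar (g - gδ)‖) := by ring
  linarith [sq_nonneg ‖K ubar - g‖]

/-- Functional error estimate for Ivanov (norm-constrained) regularization,
reduced formulation. -/
theorem stmt_5
    {X G : Type*}
    [NormedAddCommGroup X] [NormedSpace ℝ X] [CompleteSpace X]
    [NormedAddCommGroup G] [InnerProductSpace ℝ G] [CompleteSpace G]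
    (K : StrongDual ℝ X →L[ℝ] G) (Kstar : G →L[ℝ] X)
    (hadj : ∀ (u : StrongDual ℝ X) (g : G), ⟪K u, g⟫ = u (Kstar g))
    (gδ : G) (α : ℝ) (hα : 0 < α)
    (ubar : StrongDual ℝ X) (hubar : ‖ubar‖ ≤ 1/α)
    (hmin : ∀ u : StrongDual ℝ X, ‖u‖ ≤ 1/α →
      (1/2) * ‖K ubar - gδ‖^2 ≤ (1/2) * ‖K u - gδ‖^2) :
    ∀ u : StrongDual ℝ X, ‖u‖ ≤ 1/α → ∀ g : G,
      ‖K u - K ubar‖^2 ≤ ‖K u - gδ‖^2 - ‖K ubar - gδ‖^2 ∧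
      ‖K u - gδ‖^2 - ‖K ubar - gδ‖^2 ≤
        (2/α) * ‖Kstar (g - gδ)‖ + 2 * u (Kstar (g - gδ)) + ‖K u - g‖^2 :=
  stmt_5_general K Kstar hadj gδ α ubar hubar hmin
end

section
/- Let ū_h ∈ U with ‖ū_h‖_{X*} ≤ 1/α and ȳ_h ∈ Y be arbitrary; set ŷ := A⁻¹(Bū_h) and ρ_y := Aȳ_h − Bū_h ∈ W*. Then ‖Cŷ − Cȳ‖_G² ≤ ‖Cŷ − g^δ‖_G² − ‖Cȳ − g^δ‖_G² ≤ (2/α)‖B*ŵ‖_X − 2·ū_h(B*ŵ) + ‖C(A⁻¹ρ_y)‖_G². -/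
/-!
The attainable observations `C (A⁻¹ (B u))`, `‖u‖ ≤ 1/α`, form a convex set on which `C ȳ` is the
point nearest to `g^δ`, so `⟪C ȳ - g^δ, C ŷ - C ȳ⟫ ≥ 0`; expanding the
square gives the lower bound. For the upper bound, expand both squares around `C ȳ_h` instead:
the cross term `⟪C (ŷ - ȳ), C ȳ_h - g^δ⟫` equals `ū(B*ŵ) - ū_h(B*ŵ)` by the adjoint equation for `ŵ`,
and `ū(B*ŵ) ≤ ‖B*ŵ‖/α`.
-/

open RealInnerProductSpace NormedSpace

section InnerProduct

variable {F : Type*} [NormedAddCommGroup F] [InnerProductSpace ℝ F]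

theorem real_inner_sub_nonneg_of_isMinOn_norm_sub_s6 {K : Set F} (hK : Convex ℝ K) {g z : F}
    (hz : z ∈ K) (hmin : IsMinOn (fun x => ‖x - g‖) K z) {x : F} (hx : x ∈ K) :
    0 ≤ ⟪z - g, x - z⟫ := by
  have : Nonempty K := ⟨⟨z, hz⟩⟩
  have hinf : ‖g - z‖ = ⨅ w : K, ‖g - w‖ :=
    le_antisymm
      (le_ciInf fun w => by
        rw [norm_sub_rev, norm_sub_rev g]; exact isMinOn_iff.1 hmin w w.2)
      (ciInf_le (f := fun w : K => ‖g - w‖) ⟨0, by rintro _ ⟨w, rfl⟩; positivity⟩ ⟨z, hz⟩)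
  have hobtuse := (norm_eq_iInf_iff_real_inner_le_zero hK hz).1 hinf x hx
  rw [← neg_sub, inner_neg_left]
  linarith

theorem norm_sub_sq_le_of_real_inner_nonneg {g z x : F} (h : 0 ≤ ⟪z - g, x - z⟫) :
    ‖x - z‖ ^ 2 ≤ ‖x - g‖ ^ 2 - ‖z - g‖ ^ 2 := by
  rw [show x - g = (z - g) + (x - z) by abel, norm_add_sq_real]
  linarith

theorem norm_sub_sq_sub_norm_sub_sq (a b c g : F) :
    ‖a - g‖ ^ 2 - ‖b - g‖ ^ 2 = 2 * ⟪a - b, c - g⟫ + ‖a - c‖ ^ 2 - ‖b - c‖ ^ 2 := by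
  rw [show a - g = (a - c) + (c - g) by abel, show b - g = (b - c) + (c - g) by abel,
    norm_add_sq_real, norm_add_sq_real]
  simp only [inner_sub_left]
  ring

end InnerProduct

theorem real_inner_apply_eq_neg_apply_of_adjoint_eq
    {G Y W : Type*} [NormedAddCommGroup G] [InnerProductSpace ℝ G]
    [NormedAddCommGroup Y] [NormedSpace ℝ Y] [NormedAddCommGroup W] [NormedSpace ℝ W]
    {A : Y ≃L[ℝ] StrongDual ℝ W} {Astar : W ≃L[ℝ] StrongDual ℝ Y}
    (hAadj : ∀ (y : Y) (w : W), A y w = Astar w y)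
    {C : Y →L[ℝ] G} {Cstar : G →L[ℝ] StrongDual ℝ Y}
    (hCadj : ∀ (y : Y) (g : G), ⟪C y, g⟫ = Cstar g y)
    {r : G} {w : W} (hw : Astar w = -Cstar r) (z : Y) :
    ⟪C z, r⟫ = -A z w := by
  rw [hCadj, hAadj, hw, neg_apply, neg_neg]

theorem stmt_6_general
    {X G Y W : Type*}
    [NormedAddCommGroup X] [NormedSpace ℝ X]
    [NormedAddCommGroup G] [InnerProductSpace ℝ G]
    [NormedAddCommGroup Y] [NormedSpace ℝ Y]
    [NormedAddCommGroup W] [NormedSpace ℝ W]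
    (A : Y ≃L[ℝ] StrongDual ℝ W) (Astar : W ≃L[ℝ] StrongDual ℝ Y)
    (hAadj : ∀ (y : Y) (w : W), A y w = Astar w y)
    (Bstar : W →L[ℝ] X) (B : StrongDual ℝ X →L[ℝ] StrongDual ℝ W)
    (hB : ∀ (u : StrongDual ℝ X) (w : W), B u w = u (Bstar w))
    (C : Y →L[ℝ] G) (Cstar : G →L[ℝ] StrongDual ℝ Y)
    (hCadj : ∀ (y : Y) (g : G), ⟪C y, g⟫ = Cstar g y)
    (gδ : G) (α : ℝ)
    (ubar : StrongDual ℝ X) (ybar : Y)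
    (hubar : ‖ubar‖ ≤ 1/α) (hybar : ybar = A.symm (B ubar))
    (hmin : ∀ u : StrongDual ℝ X, ‖u‖ ≤ 1/α →
      (1/2) * ‖C ybar - gδ‖^2 ≤ (1/2) * ‖C (A.symm (B u)) - gδ‖^2)
    (yh : Y) (what : W)
    (hwhat : what = Astar.symm (-(Cstar (C yh - gδ))))
    (uh : StrongDual ℝ X) (huh : ‖uh‖ ≤ 1/α) :
    ‖C (A.symm (B uh)) - C ybar‖^2 ≤
      ‖C (A.symm (B uh)) - gδ‖^2 - ‖C ybar - gδ‖^2 ∧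
    ‖C (A.symm (B uh)) - gδ‖^2 - ‖C ybar - gδ‖^2 ≤
      (2/α) * ‖Bstar what‖ - 2 * uh (Bstar what)
      + ‖C (A.symm (A yh - B uh))‖^2 := by
  set yhat := A.symm (B uh)
  let L : StrongDual ℝ X →L[ℝ] G := C ∘L (A.symm : StrongDual ℝ W →L[ℝ] Y) ∘L B
  have hvar : 0 ≤ ⟪C ybar - gδ, C yhat - C ybar⟫ := by
    refine real_inner_sub_nonneg_of_isMinOn_norm_sub_s6 ((convex_closedBall 0 (1/α)).linear_image L)
      ⟨ubar, mem_closedBall_zero_iff.2 hubar, hybar ▸ rfl⟩ ?_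
      ⟨uh, mem_closedBall_zero_iff.2 huh, rfl⟩
    rintro _ ⟨u, hu, rfl⟩
    show ‖C ybar - gδ‖ ≤ ‖C (A.symm (B u)) - gδ‖
    have := hmin u (mem_closedBall_zero_iff.1 hu)
    exact (pow_le_pow_iff_left₀ (norm_nonneg _) (norm_nonneg _) two_ne_zero).1 (by linarith)
  have hAw : Astar what = -Cstar (C yh - gδ) := by rw [hwhat, Astar.apply_symm_apply]
  have hcross : ⟪C yhat - C ybar, C yh - gδ⟫ = ubar (Bstar what) - uh (Bstar what) := by
    rw [← map_sub, real_inner_apply_eq_neg_apply_of_adjoint_eq hAadj hCadj hAw, map_sub, hybar]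
    simp only [yhat, ContinuousLinearEquiv.apply_symm_apply, sub_apply, hB]
    ring
  have hres : C (A.symm (A yh - B uh)) = C yh - C yhat := by
    rw [map_sub, A.symm_apply_apply, map_sub]
  have hdual : ubar (Bstar what) ≤ 1/α * ‖Bstar what‖ :=
    (Real.le_norm_self _).trans <| (ubar.le_opNorm _).trans <|
      mul_le_mul_of_nonneg_right hubar (norm_nonneg _)
  refine ⟨norm_sub_sq_le_of_real_inner_nonneg hvar, ?_⟩
  rw [norm_sub_sq_sub_norm_sub_sq _ _ (C yh), hcross, hres, norm_sub_rev (C yh),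
    show 2 / α = 2 * (1 / α) by ring]
  linarith [sq_nonneg ‖C ybar - C yh‖]

/-- A posteriori error estimate for Ivanov regularization of a PDE-constrained
problem: estimate at the exact state ŷ = A⁻¹(Bū_h). -/
theorem stmt_6
    {X G Y W : Type*}
    [NormedAddCommGroup X] [NormedSpace ℝ X] [CompleteSpace X]
    [NormedAddCommGroup G] [InnerProductSpace ℝ G] [CompleteSpace G]
    [NormedAddCommGroup Y] [NormedSpace ℝ Y] [CompleteSpace Y]
    [NormedAddCommGroup W] [NormedSpace ℝ W] [CompleteSpace W]
    (A : Y ≃L[ℝ] StrongDual ℝ W) (Astar : W ≃L[ℝ] StrongDual ℝ Y)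
    (hAadj : ∀ (y : Y) (w : W), A y w = Astar w y)
    (Bstar : W →L[ℝ] X) (B : StrongDual ℝ X →L[ℝ] StrongDual ℝ W)
    (hB : ∀ (u : StrongDual ℝ X) (w : W), B u w = u (Bstar w))
    (C : Y →L[ℝ] G) (Cstar : G →L[ℝ] StrongDual ℝ Y)
    (hCadj : ∀ (y : Y) (g : G), ⟪C y, g⟫ = Cstar g y)
    (gδ : G) (α : ℝ) (hα : 0 < α)
    (ubar : StrongDual ℝ X) (ybar : Y)
    (hubar : ‖ubar‖ ≤ 1/α) (hybar : ybar = A.symm (B ubar))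
    (hmin : ∀ u : StrongDual ℝ X, ‖u‖ ≤ 1/α →
      (1/2) * ‖C ybar - gδ‖^2 ≤ (1/2) * ‖C (A.symm (B u)) - gδ‖^2)
    (yh : Y) (what : W)
    (hwhat : what = Astar.symm (-(Cstar (C yh - gδ))))
    (uh : StrongDual ℝ X) (huh : ‖uh‖ ≤ 1/α) :
    ‖C (A.symm (B uh)) - C ybar‖^2 ≤
      ‖C (A.symm (B uh)) - gδ‖^2 - ‖C ybar - gδ‖^2 ∧
    ‖C (A.symm (B uh)) - gδ‖^2 - ‖C ybar - gδ‖^2 ≤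
      (2/α) * ‖Bstar what‖ - 2 * uh (Bstar what)
      + ‖C (A.symm (A yh - B uh))‖^2 :=
  stmt_6_general A Astar hAadj Bstar B hB C Cstar hCadj gδ α ubar ybar hubar hybar hmin yh what
    hwhat uh huh
end

section
/- Let ū_h ∈ U with ‖ū_h‖_{X*} ≤ 1/α and ȳ_h ∈ Y be arbitrary, and set ρ_y := Aȳ_h − Bū_h ∈ W*. Then ‖Cȳ_h − Cȳ‖_G² ≤ (4/α)‖B*ŵ‖_X − 4·ū_h(B*ŵ) + 4‖C(A⁻¹ρ_y)‖_G². -/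
/-!
The optimal control `ū` satisfies the variational inequality
`0 ≤ ⟪Cȳ - gδ, C(A⁻¹Bū_h) - Cȳ⟫` (first-order optimality on the convex ball), while the adjoint
state turns `⟪Cȳ_h - gδ, C(A⁻¹Bū_h) - Cȳ⟫` into `ū(B*ŵ) - ū_h(B*ŵ)`. Splitting
`Cȳ_h - Cȳ = C(A⁻¹ρ_y) + (C(A⁻¹Bū_h) - Cȳ)` and combining the two facts gives
`‖Cȳ_h - Cȳ‖² ≤ 2 (ū - ū_h)(B*ŵ) + ‖C(A⁻¹ρ_y)‖²`; the norm constraints on `ū` and `ū_h`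
finish the estimate.
-/

open RealInnerProductSpace NormedSpace

theorem inner_sub_map_sub_nonneg_of_isMinOn {E F : Type*}
    [NormedAddCommGroup E] [NormedSpace ℝ E] [NormedAddCommGroup F] [InnerProductSpace ℝ F]
    (S : E →L[ℝ] F) (g : F) {s : Set E} (hs : Convex ℝ s) {x y : E} (hx : x ∈ s) (hy : y ∈ s)
    (hmin : IsMinOn (fun u ↦ ‖S u - g‖ ^ 2) s x) :
    0 ≤ ⟪S x - g, S y - S x⟫ := by
  have hderiv : HasFDerivAt (fun u ↦ ‖S u - g‖ ^ 2) (2 • (innerSL ℝ (S x - g)).comp S) x :=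
    (S.hasFDerivAt.sub_const g).norm_sq
  have := hmin.localize.hasFDerivWithinAt_nonneg hderiv.hasFDerivWithinAt
    (sub_mem_posTangentConeAt_of_segment_subset (hs.segment_subset hx hy))
  rw [smul_apply, ContinuousLinearMap.comp_apply, innerSL_apply_apply, map_sub, two_smul] at this
  linarith

theorem real_inner_map_eq_neg_apply_of_adjoint {Y W G : Type*}
    [NormedAddCommGroup Y] [NormedSpace ℝ Y] [NormedAddCommGroup W] [NormedSpace ℝ W]
    [NormedAddCommGroup G] [InnerProductSpace ℝ G]
    (A : Y →L[ℝ] StrongDual ℝ W) (Astar : W →L[ℝ] StrongDual ℝ Y)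
    (hAadj : ∀ y w, A y w = Astar w y) (C : Y →L[ℝ] G) (Cstar : G →L[ℝ] StrongDual ℝ Y)
    (hCadj : ∀ y g, ⟪C y, g⟫ = Cstar g y) {p : G} {w : W} (hw : Astar w = -Cstar p) (y : Y) :
    ⟪C y, p⟫ = -A y w := by
  rw [hCadj, hAadj, hw, neg_apply, neg_neg]

theorem norm_sub_sq_le_of_inner_nonneg {G : Type*} [NormedAddCommGroup G]
    [InnerProductSpace ℝ G] {p q d : G} (h : 0 ≤ ⟪q, d⟫) :
    ‖p - q‖ ^ 2 ≤ 2 * ⟪p, d⟫ + ‖p - q - d‖ ^ 2 := by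
  rw [norm_sub_sq_real (p - q), inner_sub_left]
  nlinarith [sq_nonneg ‖d‖]

theorem stmt_7_general
    {X G Y W : Type*}
    [NormedAddCommGroup X] [NormedSpace ℝ X]
    [NormedAddCommGroup G] [InnerProductSpace ℝ G]
    [NormedAddCommGroup Y] [NormedSpace ℝ Y]
    [NormedAddCommGroup W] [NormedSpace ℝ W]
    (A : Y ≃L[ℝ] StrongDual ℝ W) (Astar : W ≃L[ℝ] StrongDual ℝ Y)
    (hAadj : ∀ (y : Y) (w : W), A y w = Astar w y)
    (Bstar : W →L[ℝ] X) (B : StrongDual ℝ X →L[ℝ] StrongDual ℝ W)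
    (hB : ∀ (u : StrongDual ℝ X) (w : W), B u w = u (Bstar w))
    (C : Y →L[ℝ] G) (Cstar : G →L[ℝ] StrongDual ℝ Y)
    (hCadj : ∀ (y : Y) (g : G), ⟪C y, g⟫ = Cstar g y)
    (gδ : G) (α : ℝ)
    (ubar : StrongDual ℝ X) (ybar : Y)
    (hubar : ‖ubar‖ ≤ 1/α) (hybar : ybar = A.symm (B ubar))
    (hmin : ∀ u : StrongDual ℝ X, ‖u‖ ≤ 1/α →
      (1/2) * ‖C ybar - gδ‖^2 ≤ (1/2) * ‖C (A.symm (B u)) - gδ‖^2)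
    (yh : Y) (what : W)
    (hwhat : what = Astar.symm (-(Cstar (C yh - gδ))))
    (uh : StrongDual ℝ X) (huh : ‖uh‖ ≤ 1/α) :
    ‖C yh - C ybar‖^2 ≤
      (4/α) * ‖Bstar what‖ - 4 * uh (Bstar what)
      + 4 * ‖C (A.symm (A yh - B uh))‖^2 := by
  set yt := A.symm (B uh)
  have hvar : 0 ≤ ⟪C ybar - gδ, C yt - C ybar⟫ := by
    subst hybar
    refine inner_sub_map_sub_nonneg_of_isMinOn (C ∘L (A.symm : StrongDual ℝ W →L[ℝ] Y) ∘L B) gδ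
      (convex_closedBall 0 (1/α)) (mem_closedBall_zero_iff.2 hubar)
      (mem_closedBall_zero_iff.2 huh) fun u hu ↦ ?_
    have := hmin u (mem_closedBall_zero_iff.1 hu)
    simp only [Set.mem_ofPred_eq, ContinuousLinearMap.comp_apply, ContinuousLinearEquiv.coe_coe]
    linarith
  have hdual : ⟪C yh - gδ, C yt - C ybar⟫ = ubar (Bstar what) - uh (Bstar what) := by
    rw [real_inner_comm, ← map_sub, real_inner_map_eq_neg_apply_of_adjoint
      (A : Y →L[ℝ] StrongDual ℝ W) Astar hAadj C Cstar hCadj (w := what) (by simp [hwhat])]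
    simp [yt, hybar, hB]
  have hres : C (A.symm (A yh - B uh)) = C yh - C yt := by simp [yt]
  have key := norm_sub_sq_le_of_inner_nonneg (p := C yh - gδ) hvar
  rw [sub_sub_sub_cancel_right, sub_sub_sub_cancel_right, hdual, ← hres] at key
  have hubar_apply := (Real.le_norm_self _).trans (ubar.le_of_opNorm_le hubar (Bstar what))
  have huh_apply := (Real.le_norm_self _).trans (uh.le_of_opNorm_le huh (Bstar what))
  rw [div_eq_mul_one_div 4 α]
  linarith [sq_nonneg ‖C (A.symm (A yh - B uh))‖]

/-- A posteriori error estimate for Ivanov regularization: residual estimate at the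
discrete state ȳ_h. -/
theorem stmt_7
    {X G Y W : Type*}
    [NormedAddCommGroup X] [NormedSpace ℝ X] [CompleteSpace X]
    [NormedAddCommGroup G] [InnerProductSpace ℝ G] [CompleteSpace G]
    [NormedAddCommGroup Y] [NormedSpace ℝ Y] [CompleteSpace Y]
    [NormedAddCommGroup W] [NormedSpace ℝ W] [CompleteSpace W]
    (A : Y ≃L[ℝ] StrongDual ℝ W) (Astar : W ≃L[ℝ] StrongDual ℝ Y)
    (hAadj : ∀ (y : Y) (w : W), A y w = Astar w y)
    (Bstar : W →L[ℝ] X) (B : StrongDual ℝ X →L[ℝ] StrongDual ℝ W)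
    (hB : ∀ (u : StrongDual ℝ X) (w : W), B u w = u (Bstar w))
    (C : Y →L[ℝ] G) (Cstar : G →L[ℝ] StrongDual ℝ Y)
    (hCadj : ∀ (y : Y) (g : G), ⟪C y, g⟫ = Cstar g y)
    (gδ : G) (α : ℝ) (hα : 0 < α)
    (ubar : StrongDual ℝ X) (ybar : Y)
    (hubar : ‖ubar‖ ≤ 1/α) (hybar : ybar = A.symm (B ubar))
    (hmin : ∀ u : StrongDual ℝ X, ‖u‖ ≤ 1/α →
      (1/2) * ‖C ybar - gδ‖^2 ≤ (1/2) * ‖C (A.symm (B u)) - gδ‖^2)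
    (yh : Y) (what : W)
    (hwhat : what = Astar.symm (-(Cstar (C yh - gδ))))
    (uh : StrongDual ℝ X) (huh : ‖uh‖ ≤ 1/α) :
    ‖C yh - C ybar‖^2 ≤
      (4/α) * ‖Bstar what‖ - 4 * uh (Bstar what)
      + 4 * ‖C (A.symm (A yh - B uh))‖^2 :=
  stmt_7_general A Astar hAadj Bstar B hB C Cstar hCadj gδ α ubar ybar hubar hybar hmin yh what
    hwhat uh huh
end

section
/- Let ū_h ∈ U with ‖ū_h‖_{X*} ≤ 1/α and ȳ_h ∈ Y be arbitrary, and set ρ_y := Aȳ_h − Bū_h ∈ W*. Then (1/2)‖Cȳ_h − g^δ‖_G² − (1/2)‖Cȳ − g^δ‖_G² ≤ (1/α)‖B*ŵ‖_X − ū_h(B*ŵ) + ‖C(A⁻¹ρ_y)‖_G · ‖Cȳ_h − g^δ‖_G. -/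
/-!
Write `a := C ȳ_h − g^δ`. Convexity of `½‖·‖²` bounds the left side by `⟪a, C(ȳ_h − ȳ)⟫`, and
`ȳ_h − ȳ` splits as `A⁻¹ρ_y + A⁻¹(Bū_h − Bū)`. The first part is estimated by Cauchy–Schwarz.
For the second, the adjoint equation `C*a = −A*ŵ` moves the pairing to `W`, where it becomes
`ū(B*ŵ) − ū_h(B*ŵ)`, and `‖ū‖ ≤ 1/α` bounds `ū(B*ŵ)` by `(1/α)‖B*ŵ‖`.
-/

open RealInnerProductSpace NormedSpace

theorem half_sq_norm_sub_half_sq_norm_le_inner {G : Type*} [NormedAddCommGroup G]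
    [InnerProductSpace ℝ G] (a b : G) :
    1 / 2 * ‖a‖ ^ 2 - 1 / 2 * ‖b‖ ^ 2 ≤ ⟪a, a - b⟫ := by
  have hexpand : ‖a - b‖ ^ 2 = ‖a‖ ^ 2 - 2 * ⟪a, b⟫ + ‖b‖ ^ 2 := norm_sub_sq_real a b
  rw [inner_sub_right, real_inner_self_eq_norm_sq]
  nlinarith [sq_nonneg ‖a - b‖]

theorem StrongDual.apply_le_of_norm_le {E : Type*} [NormedAddCommGroup E] [NormedSpace ℝ E]
    {u : StrongDual ℝ E} {r : ℝ} (hu : ‖u‖ ≤ r) (x : E) : u x ≤ r * ‖x‖ :=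
  (le_abs_self _).trans (u.le_of_opNorm_le hu x)

theorem inner_apply_eq_neg_dual_apply_of_adjoint {G Y W : Type*}
    [NormedAddCommGroup G] [InnerProductSpace ℝ G]
    [NormedAddCommGroup Y] [NormedSpace ℝ Y] [NormedAddCommGroup W] [NormedSpace ℝ W]
    {A : Y →L[ℝ] StrongDual ℝ W} {Astar : W →L[ℝ] StrongDual ℝ Y}
    (hAadj : ∀ (y : Y) (w : W), A y w = Astar w y)
    {C : Y →L[ℝ] G} {Cstar : G →L[ℝ] StrongDual ℝ Y}
    (hCadj : ∀ (y : Y) (g : G), ⟪C y, g⟫ = Cstar g y)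
    {a : G} {w : W} (hw : Cstar a = -Astar w) (y : Y) :
    ⟪a, C y⟫ = -A y w := by
  rw [real_inner_comm, hCadj, hw, hAadj, neg_apply]

theorem stmt_8_general
    {X G Y W : Type*}
    [NormedAddCommGroup X] [NormedSpace ℝ X]
    [NormedAddCommGroup G] [InnerProductSpace ℝ G]
    [NormedAddCommGroup Y] [NormedSpace ℝ Y]
    [NormedAddCommGroup W] [NormedSpace ℝ W]
    (A : Y ≃L[ℝ] StrongDual ℝ W) (Astar : W ≃L[ℝ] StrongDual ℝ Y)
    (hAadj : ∀ (y : Y) (w : W), A y w = Astar w y)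
    (Bstar : W →L[ℝ] X) (B : StrongDual ℝ X →L[ℝ] StrongDual ℝ W)
    (hB : ∀ (u : StrongDual ℝ X) (w : W), B u w = u (Bstar w))
    (C : Y →L[ℝ] G) (Cstar : G →L[ℝ] StrongDual ℝ Y)
    (hCadj : ∀ (y : Y) (g : G), ⟪C y, g⟫ = Cstar g y)
    (gδ : G) (α : ℝ)
    (ubar : StrongDual ℝ X) (ybar : Y)
    (hubar : ‖ubar‖ ≤ 1/α) (hybar : ybar = A.symm (B ubar))
    (yh : Y) (what : W)
    (hwhat : what = Astar.symm (-(Cstar (C yh - gδ))))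
    (uh : StrongDual ℝ X) :
    (1/2) * ‖C yh - gδ‖^2 - (1/2) * ‖C ybar - gδ‖^2 ≤
      (1/α) * ‖Bstar what‖ - uh (Bstar what)
      + ‖C (A.symm (A yh - B uh))‖ * ‖C yh - gδ‖ := by
  set a := C yh - gδ
  have hadjoint : Cstar a = -(Astar : W →L[ℝ] StrongDual ℝ Y) what := by
    rw [ContinuousLinearEquiv.coe_coe, hwhat, Astar.apply_symm_apply, neg_neg]
  have hsplit : yh - ybar = A.symm (A yh - B uh) + A.symm (B uh - B ubar) := by
    rw [← map_add, sub_add_sub_cancel, map_sub, A.symm_apply_apply, hybar]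
  have hcontrol : ⟪a, C (A.symm (B uh - B ubar))⟫ = ubar (Bstar what) - uh (Bstar what) := by
    rw [inner_apply_eq_neg_dual_apply_of_adjoint (A := A) hAadj hCadj hadjoint,
      ContinuousLinearEquiv.coe_coe, A.apply_symm_apply,
      sub_apply, hB, hB, neg_sub]
  calc (1/2) * ‖a‖^2 - (1/2) * ‖C ybar - gδ‖^2
      ≤ ⟪a, a - (C ybar - gδ)⟫ := half_sq_norm_sub_half_sq_norm_le_inner _ _
    _ = ⟪a, C (A.symm (A yh - B uh))⟫ + ⟪a, C (A.symm (B uh - B ubar))⟫ := by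
      rw [sub_sub_sub_cancel_right, ← map_sub, hsplit, map_add, inner_add_right]
    _ ≤ ‖a‖ * ‖C (A.symm (A yh - B uh))‖ + ((1/α) * ‖Bstar what‖ - uh (Bstar what)) := by
      rw [hcontrol]
      gcongr
      · exact real_inner_le_norm _ _
      · exact StrongDual.apply_le_of_norm_le hubar _
    _ = _ := by ring

/-- A posteriori estimate of the discrepancy functional error for Ivanov
regularization at the discrete state ȳ_h. -/
theorem stmt_8
    {X G Y W : Type*}
    [NormedAddCommGroup X] [NormedSpace ℝ X] [CompleteSpace X]
    [NormedAddCommGroup G] [InnerProductSpace ℝ G] [CompleteSpace G]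
    [NormedAddCommGroup Y] [NormedSpace ℝ Y] [CompleteSpace Y]
    [NormedAddCommGroup W] [NormedSpace ℝ W] [CompleteSpace W]
    (A : Y ≃L[ℝ] StrongDual ℝ W) (Astar : W ≃L[ℝ] StrongDual ℝ Y)
    (hAadj : ∀ (y : Y) (w : W), A y w = Astar w y)
    (Bstar : W →L[ℝ] X) (B : StrongDual ℝ X →L[ℝ] StrongDual ℝ W)
    (hB : ∀ (u : StrongDual ℝ X) (w : W), B u w = u (Bstar w))
    (C : Y →L[ℝ] G) (Cstar : G →L[ℝ] StrongDual ℝ Y)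
    (hCadj : ∀ (y : Y) (g : G), ⟪C y, g⟫ = Cstar g y)
    (gδ : G) (α : ℝ) (hα : 0 < α)
    (ubar : StrongDual ℝ X) (ybar : Y)
    (hubar : ‖ubar‖ ≤ 1/α) (hybar : ybar = A.symm (B ubar))
    (hmin : ∀ u : StrongDual ℝ X, ‖u‖ ≤ 1/α →
      (1/2) * ‖C ybar - gδ‖^2 ≤ (1/2) * ‖C (A.symm (B u)) - gδ‖^2)
    (yh : Y) (what : W)
    (hwhat : what = Astar.symm (-(Cstar (C yh - gδ))))
    (uh : StrongDual ℝ X) (huh : ‖uh‖ ≤ 1/α) :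
    (1/2) * ‖C yh - gδ‖^2 - (1/2) * ‖C ybar - gδ‖^2 ≤
      (1/α) * ‖Bstar what‖ - uh (Bstar what)
      + ‖C (A.symm (A yh - B uh))‖ * ‖C yh - gδ‖ :=
  stmt_8_general A Astar hAadj Bstar B hB C Cstar hCadj gδ α ubar ybar hubar hybar yh what hwhat uh
end

section
/- Let ū_h ∈ U with ‖ū_h‖_{X*} ≤ 1/α, ȳ_h ∈ Y, and w̄_h ∈ W be arbitrary; set ρ_y := Aȳ_h − Bū_h ∈ W*. Let ζ_h be a subgradient of the norm ‖·‖_X at B*w̄_h and ζ̂ a subgradient of ‖·‖_X at B*ŵ; set ρ_u := αū_h − ζ_h ∈ U and D := (ζ̂ − ζ_h)(B*(ŵ − w̄_h)). Then ‖Cȳ_h − Cȳ‖_G² ≤ (4/α)(−ρ_u)(B*ŵ) + (4/α)D + 4‖C(A⁻¹ρ_y)‖_G². -/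
open RealInnerProductSpace

/-!
Write `a = C ȳ_h - g^δ`, `b = C ȳ - g^δ` and `d = C A⁻¹ρ_y`. Since `A⁻¹(B ū_h) = ȳ_h - A⁻¹ρ_y`,
testing the minimality of `ū` with the admissible `ū_h` gives `‖b‖² ≤ ‖a - d‖²`, and expanding
the squares yields `‖a - b‖² ≤ ‖d‖² + 2⟪a, a - b - d⟫`. The adjoint state `ŵ` turns the cross
term into `(ū - ū_h)(B*ŵ)`. Finally `α ū(B*ŵ) ≤ ‖B*ŵ‖ = ζ̂(B*ŵ)` and `ζ̂(B*w̄_h) ≤ ‖B*w̄_h‖ = ζ_h(B*w̄_h)`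
bound `α (ū - ū_h)(B*ŵ)` by the nonnegative quantity `(-ρ_u)(B*ŵ) + D`.
-/

def IsNormSubgradient {X : Type*} [SeminormedAddCommGroup X] [NormedSpace ℝ X]
    (ζ : StrongDual ℝ X) (x : X) : Prop :=
  ∀ z : X, ζ z - ζ x ≤ ‖z‖ - ‖x‖

namespace IsNormSubgradient

variable {X : Type*} [SeminormedAddCommGroup X] [NormedSpace ℝ X] {ζ : StrongDual ℝ X} {x : X}

theorem apply_self (h : IsNormSubgradient ζ x) : ζ x = ‖x‖ := by
  have h0 := h 0
  have h2 := h ((2 : ℝ) • x)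
  simp only [map_zero, norm_zero, map_smul, norm_smul, smul_eq_mul, Real.norm_ofNat] at h0 h2
  linarith

theorem apply_le (h : IsNormSubgradient ζ x) (z : X) : ζ z ≤ ‖z‖ := by
  linarith [h z, h.apply_self]

end IsNormSubgradient

section NormConstraint

variable {X : Type*} [SeminormedAddCommGroup X] [NormedSpace ℝ X]
  {α : ℝ} {u v ζ ζ' : StrongDual ℝ X} {x x' : X}

theorem StrongDual.mul_apply_le_norm_of_norm_le_inv (hα : 0 < α) (hu : ‖u‖ ≤ 1 / α) (x : X) :
    α * u x ≤ ‖x‖ := by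
  have hux : u x ≤ 1 / α * ‖x‖ :=
    (le_abs_self _).trans ((u.le_opNorm x).trans (mul_le_mul_of_nonneg_right hu (norm_nonneg x)))
  calc α * u x ≤ α * (1 / α * ‖x‖) := mul_le_mul_of_nonneg_left hux hα.le
    _ = ‖x‖ := by field_simp

/-- The left side equals `(‖x'‖ - α u x') + (‖x‖ - ζ' x)`. -/
theorem residual_nonneg (hα : 0 < α) (hu : ‖u‖ ≤ 1 / α)
    (hζ : IsNormSubgradient ζ x) (hζ' : IsNormSubgradient ζ' x') :
    0 ≤ (-(α • u - ζ)) x' + (ζ' - ζ) (x' - x) := by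
  have hu' := StrongDual.mul_apply_le_norm_of_norm_le_inv hα hu x'
  simp only [neg_apply, sub_apply, smul_apply, smul_eq_mul, map_sub]
  linarith [hζ.apply_self, hζ'.apply_self, hζ'.apply_le x]

theorem mul_sub_apply_le_residual (hα : 0 < α) (hv : ‖v‖ ≤ 1 / α)
    (hζ : IsNormSubgradient ζ x) (hζ' : IsNormSubgradient ζ' x') :
    α * (v x' - u x') ≤ (-(α • u - ζ)) x' + (ζ' - ζ) (x' - x) := by
  have hv' := StrongDual.mul_apply_le_norm_of_norm_le_inv hα hv x'
  simp only [neg_apply, sub_apply, smul_apply, smul_eq_mul, map_sub]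
  linarith [hζ.apply_self, hζ'.apply_self, hζ'.apply_le x]

end NormConstraint

theorem norm_sub_sq_le_of_sq_norm_le_sq_norm_sub {G : Type*} [NormedAddCommGroup G]
    [InnerProductSpace ℝ G] {a b d : G} (h : ‖b‖ ^ 2 ≤ ‖a - d‖ ^ 2) :
    ‖a - b‖ ^ 2 ≤ ‖d‖ ^ 2 + 2 * ⟪a, a - b - d⟫ := by
  rw [norm_sub_sq_real] at h ⊢
  rw [inner_sub_right, inner_sub_right, real_inner_self_eq_norm_sq]
  linarith

theorem inner_apply_eq_neg_of_adjoint_state {G Y W : Type*} [NormedAddCommGroup G]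
    [InnerProductSpace ℝ G] [NormedAddCommGroup Y] [NormedSpace ℝ Y]
    [NormedAddCommGroup W] [NormedSpace ℝ W]
    {A : Y → StrongDual ℝ W} {Astar : W → StrongDual ℝ Y}
    (hAadj : ∀ (y : Y) (w : W), A y w = Astar w y)
    {C : Y → G} {Cstar : G → StrongDual ℝ Y}
    (hCadj : ∀ (y : Y) (g : G), ⟪C y, g⟫ = Cstar g y)
    {a : G} {w : W} (hw : Astar w = -(Cstar a)) (y : Y) :
    ⟪a, C y⟫ = -(A y w) := by
  rw [real_inner_comm, hCadj, hAadj, hw, neg_apply, neg_neg]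

theorem stmt_9_general
    {X G Y W : Type*}
    [NormedAddCommGroup X] [NormedSpace ℝ X]
    [NormedAddCommGroup G] [InnerProductSpace ℝ G]
    [NormedAddCommGroup Y] [NormedSpace ℝ Y]
    [NormedAddCommGroup W] [NormedSpace ℝ W]
    (A : Y ≃L[ℝ] StrongDual ℝ W) (Astar : W ≃L[ℝ] StrongDual ℝ Y)
    (hAadj : ∀ (y : Y) (w : W), A y w = Astar w y)
    (Bstar : W →L[ℝ] X) (B : StrongDual ℝ X →L[ℝ] StrongDual ℝ W)
    (hB : ∀ (u : StrongDual ℝ X) (w : W), B u w = u (Bstar w))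
    (C : Y →L[ℝ] G) (Cstar : G →L[ℝ] StrongDual ℝ Y)
    (hCadj : ∀ (y : Y) (g : G), ⟪C y, g⟫ = Cstar g y)
    (gδ : G) (α : ℝ) (hα : 0 < α)
    (ubar : StrongDual ℝ X) (ybar : Y)
    (hubar : ‖ubar‖ ≤ 1/α) (hybar : ybar = A.symm (B ubar))
    (hmin : ∀ u : StrongDual ℝ X, ‖u‖ ≤ 1/α →
      (1/2) * ‖C ybar - gδ‖^2 ≤ (1/2) * ‖C (A.symm (B u)) - gδ‖^2)
    (yh : Y) (what : W)
    (hwhat : what = Astar.symm (-(Cstar (C yh - gδ))))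
    (uh : StrongDual ℝ X) (huh : ‖uh‖ ≤ 1/α) (wh : W)
    (ζh ζhat : StrongDual ℝ X)
    (hζh : ∀ x : X, ζh x - ζh (Bstar wh) ≤ ‖x‖ - ‖Bstar wh‖)
    (hζhat : ∀ x : X, ζhat x - ζhat (Bstar what) ≤ ‖x‖ - ‖Bstar what‖) :
    ‖C yh - C ybar‖^2 ≤
      (4/α) * ((-(α • uh - ζh)) (Bstar what))
      + (4/α) * ((ζhat - ζh) (Bstar (what - wh)))
      + 4 * ‖C (A.symm (A yh - B uh))‖^2 := by
  set ρ := A yh - B uh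
  have hsymm : A.symm (B uh) = yh - A.symm ρ := by
    rw [map_sub, A.symm_apply_apply, sub_sub_cancel]
  have hmin_uh : ‖C ybar - gδ‖ ^ 2 ≤ ‖(C yh - gδ) - C (A.symm ρ)‖ ^ 2 := by
    have := hmin uh huh
    rw [hsymm, map_sub, sub_right_comm] at this
    linarith
  have hcross : ⟪C yh - gδ, C yh - C ybar - C (A.symm ρ)⟫
      = ubar (Bstar what) - uh (Bstar what) := by
    have hAw : Astar what = -(Cstar (C yh - gδ)) := by
      rw [hwhat]; exact Astar.apply_symm_apply _
    rw [← map_sub, ← map_sub, inner_apply_eq_neg_of_adjoint_state hAadj hCadj hAw]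
    simp only [map_sub, A.apply_symm_apply, hybar, sub_apply, hB, ρ]
    ring
  have hquad := norm_sub_sq_le_of_sq_norm_le_sq_norm_sub hmin_uh
  rw [sub_sub_sub_cancel_right, hcross] at hquad
  have hres := mul_sub_apply_le_residual (u := uh) hα hubar hζh hζhat
  have hres_nonneg := residual_nonneg hα huh hζh hζhat
  have hcross_le : 2 * (ubar (Bstar what) - uh (Bstar what)) ≤
      4 / α * ((-(α • uh - ζh)) (Bstar what) + (ζhat - ζh) (Bstar what - Bstar wh)) := by
    rw [div_mul_eq_mul_div, le_div_iff₀ hα]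
    linarith
  rw [map_sub]
  linarith [sq_nonneg ‖C (A.symm ρ)‖]

/-- A posteriori error estimate for Ivanov regularization in terms of the residual of
the subgradient relation and a symmetric Bregman distance. -/
theorem stmt_9
    {X G Y W : Type*}
    [NormedAddCommGroup X] [NormedSpace ℝ X] [CompleteSpace X]
    [NormedAddCommGroup G] [InnerProductSpace ℝ G] [CompleteSpace G]
    [NormedAddCommGroup Y] [NormedSpace ℝ Y] [CompleteSpace Y]
    [NormedAddCommGroup W] [NormedSpace ℝ W] [CompleteSpace W]
    (A : Y ≃L[ℝ] StrongDual ℝ W) (Astar : W ≃L[ℝ] StrongDual ℝ Y)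
    (hAadj : ∀ (y : Y) (w : W), A y w = Astar w y)
    (Bstar : W →L[ℝ] X) (B : StrongDual ℝ X →L[ℝ] StrongDual ℝ W)
    (hB : ∀ (u : StrongDual ℝ X) (w : W), B u w = u (Bstar w))
    (C : Y →L[ℝ] G) (Cstar : G →L[ℝ] StrongDual ℝ Y)
    (hCadj : ∀ (y : Y) (g : G), ⟪C y, g⟫ = Cstar g y)
    (gδ : G) (α : ℝ) (hα : 0 < α)
    (ubar : StrongDual ℝ X) (ybar : Y)
    (hubar : ‖ubar‖ ≤ 1/α) (hybar : ybar = A.symm (B ubar))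
    (hmin : ∀ u : StrongDual ℝ X, ‖u‖ ≤ 1/α →
      (1/2) * ‖C ybar - gδ‖^2 ≤ (1/2) * ‖C (A.symm (B u)) - gδ‖^2)
    (yh : Y) (what : W)
    (hwhat : what = Astar.symm (-(Cstar (C yh - gδ))))
    (uh : StrongDual ℝ X) (huh : ‖uh‖ ≤ 1/α) (wh : W)
    (ζh ζhat : StrongDual ℝ X)
    (hζh : ∀ x : X, ζh x - ζh (Bstar wh) ≤ ‖x‖ - ‖Bstar wh‖)
    (hζhat : ∀ x : X, ζhat x - ζhat (Bstar what) ≤ ‖x‖ - ‖Bstar what‖) :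
    ‖C yh - C ybar‖^2 ≤
      (4/α) * ((-(α • uh - ζh)) (Bstar what))
      + (4/α) * ((ζhat - ζh) (Bstar (what - wh)))
      + 4 * ‖C (A.symm (A yh - B uh))‖^2 :=
  stmt_9_general A Astar hAadj Bstar B hB C Cstar hCadj gδ α hα ubar ybar hubar hybar hmin yh what
    hwhat uh huh wh ζh ζhat hζh hζhat
end

section
/- Let ū ∈ U be a global minimizer of J(u) := (1/2)‖Ku − g^δ‖_G² + α‖u‖_{X*} over U. Then for every u ∈ U and every g ∈ G with ‖K*(g − g^δ)‖_X ≤ α: ‖Ku − Kū‖_G² ≤ 2(J(u) − J(ū)) ≤ 2α‖u‖_{X*} + 2·u(K*(g − g^δ)) + ‖Ku − g‖_G². -/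
/-!
The fidelity `½‖· - g^δ‖²` is strongly convex, so along the segment `(1 - t) ū + t u` minimality
of `ū` gives `J ū ≤ J u - (1 - t)/2 ‖K u - K ū‖²` for every `t ∈ (0, 1)`; letting `t → 0` yields the
first inequality. The second is weak duality: if `‖K*(g - g^δ)‖ ≤ α` then `α‖v‖ ≥ -(K v, g - g^δ)`,
which makes `(‖g^δ‖² - ‖g‖²)/2` a lower bound for `J`, and `J u` exceeds this bound by exactly
`α‖u‖ + u(K*(g - g^δ)) + ½‖K u - g‖²`.
-/

open RealInnerProductSpace Set Filter Topology

section InnerProductSpace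

variable {G : Type*} [NormedAddCommGroup G] [InnerProductSpace ℝ G]

theorem norm_one_sub_smul_add_smul_sq (a b : G) (t : ℝ) :
    ‖(1 - t) • a + t • b‖ ^ 2 = (1 - t) * ‖a‖ ^ 2 + t * ‖b‖ ^ 2 - t * (1 - t) * ‖a - b‖ ^ 2 := by
  rw [norm_add_sq_real, norm_sub_sq_real, norm_smul, norm_smul, real_inner_smul_left,
    real_inner_smul_right, mul_pow, mul_pow, Real.norm_eq_abs, Real.norm_eq_abs, sq_abs, sq_abs]
  ring

theorem norm_sub_sq_sub_norm_sq_add_norm_sq (z g h : G) :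
    ‖z - h‖ ^ 2 - ‖h‖ ^ 2 + ‖g‖ ^ 2 = 2 * ⟪z, g - h⟫ + ‖z - g‖ ^ 2 := by
  rw [norm_sub_sq_real, norm_sub_sq_real, inner_sub_right]
  ring

variable {E : Type*} [AddCommGroup E] [Module ℝ E] (A : E →ₗ[ℝ] G) (y : G) {R F : E → ℝ}

theorem segment_le_of_eq_half_norm_sq_add_convexOn (hR : ConvexOn ℝ univ R)
    (hF : ∀ x, F x = 1 / 2 * ‖A x - y‖ ^ 2 + R x) (x₀ x : E) {t : ℝ} (ht₀ : 0 ≤ t) (ht₁ : t ≤ 1) :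
    F ((1 - t) • x₀ + t • x) ≤
      (1 - t) * F x₀ + t * F x - t * (1 - t) / 2 * ‖A x - A x₀‖ ^ 2 := by
  have hA : A ((1 - t) • x₀ + t • x) - y = (1 - t) • (A x₀ - y) + t • (A x - y) := by
    simp only [map_add, map_smul]
    module
  have hRt : R ((1 - t) • x₀ + t • x) ≤ (1 - t) * R x₀ + t * R x :=
    hR.2 (mem_univ _) (mem_univ _) (by linarith) ht₀ (by ring)
  rw [hF, hF, hF, hA, norm_one_sub_smul_add_smul_sq, sub_sub_sub_cancel_right,
    norm_sub_rev (A x₀) (A x)]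
  linarith

theorem norm_map_sub_sq_le_of_forall_le (hR : ConvexOn ℝ univ R)
    (hF : ∀ x, F x = 1 / 2 * ‖A x - y‖ ^ 2 + R x) {x₀ : E} (hmin : ∀ x, F x₀ ≤ F x) (x : E) :
    ‖A x - A x₀‖ ^ 2 ≤ 2 * (F x - F x₀) := by
  have hshrunk : ∀ t ∈ Ioo (0 : ℝ) 1, (1 - t) * ‖A x - A x₀‖ ^ 2 ≤ 2 * (F x - F x₀) := by
    rintro t ⟨ht₀, ht₁⟩
    have hseg := segment_le_of_eq_half_norm_sq_add_convexOn A y hR hF x₀ x ht₀.le ht₁.le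
    have : t * ((1 - t) * ‖A x - A x₀‖ ^ 2) ≤ t * (2 * (F x - F x₀)) := by
      linarith [hmin ((1 - t) • x₀ + t • x)]
    exact le_of_mul_le_mul_left this ht₀
  have hlim : Tendsto (fun t : ℝ ↦ (1 - t) * ‖A x - A x₀‖ ^ 2) (𝓝[>] 0)
      (𝓝 (‖A x - A x₀‖ ^ 2)) := by
    have : Continuous (fun t : ℝ ↦ (1 - t) * ‖A x - A x₀‖ ^ 2) := by fun_prop
    simpa using (this.tendsto 0).mono_left nhdsWithin_le_nhds
  refine le_of_tendsto hlim ?_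
  filter_upwards [Ioo_mem_nhdsGT one_pos] with t ht using hshrunk t ht

end InnerProductSpace

section DualSpace

variable {X G : Type*} [NormedAddCommGroup X] [NormedSpace ℝ X]
  [NormedAddCommGroup G] [InnerProductSpace ℝ G]
  {K : StrongDual ℝ X →L[ℝ] G} {Kstar : G →L[ℝ] X}

theorem norm_sq_sub_norm_sq_le_of_norm_adjoint_le (hadj : ∀ u g, ⟪K u, g⟫ = u (Kstar g))
    {gδ g : G} {α : ℝ} (hg : ‖Kstar (g - gδ)‖ ≤ α) (u : StrongDual ℝ X) :
    ‖gδ‖ ^ 2 - ‖g‖ ^ 2 ≤ ‖K u - gδ‖ ^ 2 + 2 * α * ‖u‖ := by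
  have hpair : -(‖u‖ * α) ≤ ⟪K u, g - gδ⟫ := by
    rw [hadj]
    exact neg_le_of_abs_le ((u.le_opNorm _).trans (by gcongr))
  have := norm_sub_sq_sub_norm_sq_add_norm_sq (K u) g gδ
  linarith [sq_nonneg ‖K u - g‖]

end DualSpace

theorem stmt_13_general
    {X G : Type*}
    [NormedAddCommGroup X] [NormedSpace ℝ X]
    [NormedAddCommGroup G] [InnerProductSpace ℝ G]
    (K : StrongDual ℝ X →L[ℝ] G) (Kstar : G →L[ℝ] X)
    (hadj : ∀ (u : StrongDual ℝ X) (g : G), ⟪K u, g⟫ = u (Kstar g))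
    (gδ : G) (α : ℝ) (hα : 0 < α)
    (J : StrongDual ℝ X → ℝ)
    (hJ : ∀ u, J u = (1/2) * ‖K u - gδ‖^2 + α * ‖u‖)
    (ubar : StrongDual ℝ X) (hmin : ∀ u : StrongDual ℝ X, J ubar ≤ J u) :
    ∀ u : StrongDual ℝ X, ∀ g : G, ‖Kstar (g - gδ)‖ ≤ α →
      ‖K u - K ubar‖^2 ≤ 2 * (J u - J ubar) ∧
      2 * (J u - J ubar) ≤
        2 * α * ‖u‖ + 2 * u (Kstar (g - gδ)) + ‖K u - g‖^2 := by
  intro u g hg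
  refine ⟨norm_map_sub_sq_le_of_forall_le K.toLinearMap gδ
    (convexOn_univ_norm.smul hα.le) hJ hmin u, ?_⟩
  have hlower := norm_sq_sub_norm_sq_le_of_norm_adjoint_le hadj hg ubar
  have hgap := norm_sub_sq_sub_norm_sq_add_norm_sq (K u) g gδ
  rw [hJ, hJ, ← hadj]
  linarith

/-- Functional error estimate for Banach space norm regularization
(reduced formulation with measure-space-type penalty α‖u‖_{X*}). -/
theorem stmt_13
    {X G : Type*}
    [NormedAddCommGroup X] [NormedSpace ℝ X] [CompleteSpace X]
    [NormedAddCommGroup G] [InnerProductSpace ℝ G] [CompleteSpace G]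
    (K : StrongDual ℝ X →L[ℝ] G) (Kstar : G →L[ℝ] X)
    (hadj : ∀ (u : StrongDual ℝ X) (g : G), ⟪K u, g⟫ = u (Kstar g))
    (gδ : G) (α : ℝ) (hα : 0 < α)
    (J : StrongDual ℝ X → ℝ)
    (hJ : ∀ u, J u = (1/2) * ‖K u - gδ‖^2 + α * ‖u‖)
    (ubar : StrongDual ℝ X) (hmin : ∀ u : StrongDual ℝ X, J ubar ≤ J u) :
    ∀ u : StrongDual ℝ X, ∀ g : G, ‖Kstar (g - gδ)‖ ≤ α →
      ‖K u - K ubar‖^2 ≤ 2 * (J u - J ubar) ∧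
      2 * (J u - J ubar) ≤
        2 * α * ‖u‖ + 2 * u (Kstar (g - gδ)) + ‖K u - g‖^2 :=
  stmt_13_general K Kstar hadj gδ α hα J hJ ubar hmin
end

section
/- Let ū_h ∈ U, ȳ_h ∈ Y, and w̄_h ∈ W be arbitrary; set ŷ := A⁻¹(Bū_h) and ρ_y := Aȳ_h − Bū_h ∈ W*. Let κ be any real number with 0 < κ ≤ 1 and κ‖B*ŵ‖_X ≤ α (in particular κ = min{α/‖B*ŵ‖_X, 1} is admissible). Then ‖Cŷ − Cȳ‖_G² ≤ 2(J_α(ū_h, ŷ) − J_α(ū, ȳ)) ≤ 2(α‖ū_h‖_{X*} − ū_h(B*w̄_h)) + 2κ·ū_h(B*(w̄_h − ŵ)) + 2(1 − κ)·ū_h(B*w̄_h) + ‖C(A⁻¹ρ_y) + (κ − 1)(Cȳ_h − g^δ)‖_G². -/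
/-!
The reduced functional `u ↦ ½‖L u - g‖² + φ u`, with `L = C A⁻¹ B` and `φ = α‖·‖`, is quadratic
along `L` plus convex, so its first-order optimality condition at the minimiser `ū` upgrades to the
quadratic growth `½‖L u - L ū‖² ≤ J u - J ū`. For the upper bound, the scaled adjoint residual
`z = κ (C ȳ_h - g^δ)` is dual feasible: `ŵ` turns `⟪L u, z⟫` into `-κ u(B* ŵ)`, which is at most
`α‖u‖` when `κ‖B* ŵ‖ ≤ α`. Weak duality then bounds `J u_h - J ū` by the primal–dual gap at
`(u_h, z)`, and that gap is exactly the right-hand side of the estimate.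
-/

open RealInnerProductSpace Set Filter Topology

section Tikhonov

variable {V G : Type*} [AddCommGroup V] [Module ℝ V] [NormedAddCommGroup G] [InnerProductSpace ℝ G]
  (L : V →ₗ[ℝ] G) (g : G) (φ : V → ℝ)

noncomputable def tikhonov (u : V) : ℝ := 1 / 2 * ‖L u - g‖ ^ 2 + φ u

variable {L g φ}

theorem tikhonov_lineMap_le (hφ : ConvexOn ℝ univ φ) (ū u : V) {t : ℝ} (ht₀ : 0 ≤ t)
    (ht₁ : t ≤ 1) :
    tikhonov L g φ (ū + t • (u - ū)) ≤ tikhonov L g φ ū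
      + t * (⟪L ū - g, L u - L ū⟫ + φ u - φ ū + t / 2 * ‖L u - L ū‖ ^ 2) := by
  have hres : L (ū + t • (u - ū)) - g = (L ū - g) + t • (L u - L ū) := by
    simp only [map_add, map_smul, map_sub]; abel
  have hφt : φ (ū + t • (u - ū)) ≤ (1 - t) * φ ū + t * φ u := by
    have hcomb : ū + t • (u - ū) = (1 - t) • ū + t • u := by module
    simpa only [hcomb, smul_eq_mul] using
      hφ.2 (mem_univ ū) (mem_univ u) (by linarith) ht₀ (by ring)
  have hsq : ‖(L ū - g) + t • (L u - L ū)‖ ^ 2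
      = ‖L ū - g‖ ^ 2 + 2 * t * ⟪L ū - g, L u - L ū⟫ + t ^ 2 * ‖L u - L ū‖ ^ 2 := by
    rw [norm_add_sq_real, real_inner_smul_right, norm_smul, Real.norm_of_nonneg ht₀]; ring
  unfold tikhonov
  rw [hres, hsq]
  nlinarith

theorem tikhonov_variational_inequality (hφ : ConvexOn ℝ univ φ) {ū : V}
    (hmin : ∀ u, tikhonov L g φ ū ≤ tikhonov L g φ u) (u : V) :
    0 ≤ ⟪L ū - g, L u - L ū⟫ + φ u - φ ū := by
  set σ := ⟪L ū - g, L u - L ū⟫ + φ u - φ ū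
  set M := ‖L u - L ū‖ ^ 2
  have hstep : ∀ t ∈ Ioc (0 : ℝ) 1, 0 ≤ σ + t / 2 * M := fun t ⟨ht₀, ht₁⟩ => by
    have := (hmin _).trans (tikhonov_lineMap_le (g := g) hφ ū u ht₀.le ht₁)
    exact (mul_nonneg_iff_of_pos_left ht₀).mp (by linarith)
  have hlim : Tendsto (fun t : ℝ => σ + t / 2 * M) (𝓝[>] 0) (𝓝 σ) :=
    tendsto_nhdsWithin_of_tendsto_nhds <| by
      simpa using (Continuous.tendsto (by fun_prop : Continuous fun t : ℝ => σ + t / 2 * M) 0)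
  exact ge_of_tendsto hlim (eventually_of_mem (Ioc_mem_nhdsGT one_pos) hstep)

theorem sq_norm_sub_le_two_mul_tikhonov_sub (hφ : ConvexOn ℝ univ φ) {ū : V}
    (hmin : ∀ u, tikhonov L g φ ū ≤ tikhonov L g φ u) (u : V) :
    ‖L u - L ū‖ ^ 2 ≤ 2 * (tikhonov L g φ u - tikhonov L g φ ū) := by
  have hsplit : L u - g = (L ū - g) + (L u - L ū) := by abel
  have := tikhonov_variational_inequality hφ hmin u
  unfold tikhonov
  rw [hsplit, norm_add_sq_real]
  linarith

theorem two_mul_tikhonov_add_eq (u : V) (z : G) :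
    2 * tikhonov L g φ u + 2 * ⟪g, z⟫ + ‖z‖ ^ 2 = ‖L u - g - z‖ ^ 2 + 2 * (φ u + ⟪L u, z⟫) := by
  unfold tikhonov
  rw [norm_sub_sq_real (L u - g) z, inner_sub_left]
  ring

theorem two_mul_tikhonov_sub_le {ū : V} {z : G} (hz : 0 ≤ φ ū + ⟪L ū, z⟫) (u : V) :
    2 * (tikhonov L g φ u - tikhonov L g φ ū) ≤ ‖L u - g - z‖ ^ 2 + 2 * (φ u + ⟪L u, z⟫) := by
  have hu := two_mul_tikhonov_add_eq (L := L) (g := g) (φ := φ) u z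
  have hū := two_mul_tikhonov_add_eq (L := L) (g := g) (φ := φ) ū z
  nlinarith [sq_nonneg ‖L ū - g - z‖]

end Tikhonov

theorem StrongDual.mul_apply_le_mul_norm {X : Type*} [NormedAddCommGroup X] [NormedSpace ℝ X]
    (u : StrongDual ℝ X) {x : X} {κ α : ℝ} (hκ : 0 ≤ κ) (h : κ * ‖x‖ ≤ α) :
    κ * u x ≤ α * ‖u‖ :=
  calc κ * u x ≤ κ * (‖u‖ * ‖x‖) :=
        mul_le_mul_of_nonneg_left ((Real.le_norm_self _).trans (u.le_opNorm x)) hκ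
    _ = ‖u‖ * (κ * ‖x‖) := by ring
    _ ≤ ‖u‖ * α := mul_le_mul_of_nonneg_left h (norm_nonneg u)
    _ = α * ‖u‖ := mul_comm _ _

theorem stmt_14_general
    {X G Y W : Type*}
    [NormedAddCommGroup X] [NormedSpace ℝ X]
    [NormedAddCommGroup G] [InnerProductSpace ℝ G]
    [NormedAddCommGroup Y] [NormedSpace ℝ Y]
    [NormedAddCommGroup W] [NormedSpace ℝ W]
    (A : Y ≃L[ℝ] StrongDual ℝ W) (Astar : W ≃L[ℝ] StrongDual ℝ Y)
    (hAadj : ∀ (y : Y) (w : W), A y w = Astar w y)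
    (Bstar : W →L[ℝ] X) (B : StrongDual ℝ X →L[ℝ] StrongDual ℝ W)
    (hB : ∀ (u : StrongDual ℝ X) (w : W), B u w = u (Bstar w))
    (C : Y →L[ℝ] G) (Cstar : G →L[ℝ] StrongDual ℝ Y)
    (hCadj : ∀ (y : Y) (g : G), ⟪C y, g⟫ = Cstar g y)
    (gδ : G) (α : ℝ) (hα : 0 < α)
    (Jα : StrongDual ℝ X → Y → ℝ)
    (hJ : ∀ u y, Jα u y = (1/2) * ‖C y - gδ‖^2 + α * ‖u‖)
    (ubar : StrongDual ℝ X) (ybar : Y) (hybar : ybar = A.symm (B ubar))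
    (hmin : ∀ u : StrongDual ℝ X, Jα ubar ybar ≤ Jα u (A.symm (B u)))
    (yh : Y) (what : W)
    (hwhat : what = Astar.symm (-(Cstar (C yh - gδ))))
    (uh : StrongDual ℝ X) (wh : W)
    (κ : ℝ) (hκ0 : 0 < κ) (hκα : κ * ‖Bstar what‖ ≤ α) :
    ‖C (A.symm (B uh)) - C ybar‖^2 ≤
      2 * (Jα uh (A.symm (B uh)) - Jα ubar ybar) ∧
    2 * (Jα uh (A.symm (B uh)) - Jα ubar ybar) ≤
      2 * (α * ‖uh‖ - uh (Bstar wh))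
      + 2 * κ * (uh (Bstar (wh - what)))
      + 2 * (1 - κ) * (uh (Bstar wh))
      + ‖C (A.symm (A yh - B uh)) + (κ - 1) • (C yh - gδ)‖^2 := by
  subst hybar
  set r := C yh - gδ
  let L : StrongDual ℝ X →ₗ[ℝ] G :=
    C.toLinearMap ∘ₗ A.symm.toLinearEquiv.toLinearMap ∘ₗ B.toLinearMap
  have hJL : ∀ u, Jα u (A.symm (B u)) = tikhonov L gδ (fun u => α * ‖u‖) u := fun u => hJ _ _
  have hconv : ConvexOn ℝ univ fun u : StrongDual ℝ X => α * ‖u‖ :=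
    (convexOn_norm convex_univ).smul hα.le
  have hadj : ∀ u, u (Bstar what) = -⟪L u, r⟫ := fun u => by
    rw [← hB, ← A.apply_symm_apply (B u), hAadj, hwhat, Astar.apply_symm_apply,
      neg_apply, ← hCadj]
    rfl
  have hfeas : 0 ≤ α * ‖ubar‖ + ⟪L ubar, κ • r⟫ := by
    have := ubar.mul_apply_le_mul_norm hκ0.le hκα
    rw [hadj] at this
    rw [real_inner_smul_right]
    linarith
  have hres : C (A.symm (A yh - B uh)) + (κ - 1) • r = -(L uh - gδ - κ • r) := by
    simp only [map_sub, A.symm_apply_apply, r]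
    module
  simp only [hJL] at hmin ⊢
  refine ⟨sq_norm_sub_le_two_mul_tikhonov_sub hconv hmin uh,
    (two_mul_tikhonov_sub_le hfeas uh).trans_eq ?_⟩
  rw [hres, norm_neg, map_sub, map_sub, hadj, real_inner_smul_right]
  ring

/-- A posteriori error estimate for Banach space norm regularization of a
PDE-constrained problem, with scaling factor κ for the dual variable. -/
theorem stmt_14
    {X G Y W : Type*}
    [NormedAddCommGroup X] [NormedSpace ℝ X] [CompleteSpace X]
    [NormedAddCommGroup G] [InnerProductSpace ℝ G] [CompleteSpace G]
    [NormedAddCommGroup Y] [NormedSpace ℝ Y] [CompleteSpace Y]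
    [NormedAddCommGroup W] [NormedSpace ℝ W] [CompleteSpace W]
    (A : Y ≃L[ℝ] StrongDual ℝ W) (Astar : W ≃L[ℝ] StrongDual ℝ Y)
    (hAadj : ∀ (y : Y) (w : W), A y w = Astar w y)
    (Bstar : W →L[ℝ] X) (B : StrongDual ℝ X →L[ℝ] StrongDual ℝ W)
    (hB : ∀ (u : StrongDual ℝ X) (w : W), B u w = u (Bstar w))
    (C : Y →L[ℝ] G) (Cstar : G →L[ℝ] StrongDual ℝ Y)
    (hCadj : ∀ (y : Y) (g : G), ⟪C y, g⟫ = Cstar g y)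
    (gδ : G) (α : ℝ) (hα : 0 < α)
    (Jα : StrongDual ℝ X → Y → ℝ)
    (hJ : ∀ u y, Jα u y = (1/2) * ‖C y - gδ‖^2 + α * ‖u‖)
    (ubar : StrongDual ℝ X) (ybar : Y) (hybar : ybar = A.symm (B ubar))
    (hmin : ∀ u : StrongDual ℝ X, Jα ubar ybar ≤ Jα u (A.symm (B u)))
    (yh : Y) (what : W)
    (hwhat : what = Astar.symm (-(Cstar (C yh - gδ))))
    (uh : StrongDual ℝ X) (wh : W)
    (κ : ℝ) (hκ0 : 0 < κ) (hκ1 : κ ≤ 1) (hκα : κ * ‖Bstar what‖ ≤ α) :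
    ‖C (A.symm (B uh)) - C ybar‖^2 ≤
      2 * (Jα uh (A.symm (B uh)) - Jα ubar ybar) ∧
    2 * (Jα uh (A.symm (B uh)) - Jα ubar ybar) ≤
      2 * (α * ‖uh‖ - uh (Bstar wh))
      + 2 * κ * (uh (Bstar (wh - what)))
      + 2 * (1 - κ) * (uh (Bstar wh))
      + ‖C (A.symm (A yh - B uh)) + (κ - 1) • (C yh - gδ)‖^2 :=
  stmt_14_general A Astar hAadj Bstar B hB C Cstar hCadj gδ α hα Jα hJ ubar ybar hybar hmin yh what
    hwhat uh wh κ hκ0 hκα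
end

section
/- Let α > 0 and s, t, e ≥ 0 be real numbers with s ≤ t + e and t + e > 0. Define κ := min{α/s, 1} if s > 0 and κ := 1 if s = 0. Then 1 − κ ≤ max{(t − α + e)/(t + e), 0}. -/
/-- Scalar estimate for the scaling factor κ = min{α/s, 1} in the a posteriori
error analysis for Banach space norm regularization. -/
theorem stmt_15
    (α s t e : ℝ) (hα : 0 < α) (hs : 0 ≤ s) (ht : 0 ≤ t) (he : 0 ≤ e)
    (hste : s ≤ t + e) (hpos : 0 < t + e)
    (κ : ℝ) (hκ : κ = if 0 < s then min (α / s) 1 else 1) :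
    1 - κ ≤ max ((t - α + e) / (t + e)) 0 := by
  subst hκ
  by_cases hs0 : 0 < s
  · simp only [hs0, if_true]
    rcases le_or_gt 1 (α / s) with h1 | h1
    · rw [min_eq_right h1]; simp
    · rw [min_eq_left h1.le]
      have hαs : α < s := by
        have := (div_lt_one hs0).mp h1
        linarith
      have key : 1 - α / s ≤ (t - α + e) / (t + e) := by
        have h2 : 1 - α / s = (s - α) / s := by field_simp
        rw [h2, div_le_div_iff₀ hs0 hpos]
        nlinarith [mul_le_mul_of_nonneg_left hste hα.le]
      exact key.trans (le_max_left _ _)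
  · simp only [hs0, if_false]
    simp
end

section
/- For real numbers σ and γ, the statement 'for all real a, b, c, d ≥ 0 with a + b² ≤ c + d² one has a + (b + d)² ≤ γc + σd²' is equivalent to: σ ≥ 4, γ ≥ 1, and (γ − 1)z² − 2(2 − γ)z + (σ − 4) ≥ 0 for all real z ≥ 0. -/
/-- Intermediate reduction in the characterization of the admissible constants (σ, γ):
the quantified implication over quadruples of nonnegative reals is equivalent to the
nonnegativity of a quadratic polynomial in z on the nonnegative half-line. -/
theorem stmt_17 (σ γ : ℝ) :
    (∀ a b c d : ℝ, 0 ≤ a → 0 ≤ b → 0 ≤ c → 0 ≤ d →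
      a + b^2 ≤ c + d^2 → a + (b + d)^2 ≤ γ * c + σ * d^2) ↔
    (4 ≤ σ ∧ 1 ≤ γ ∧
      ∀ z : ℝ, 0 ≤ z → 0 ≤ (γ - 1) * z^2 - 2 * (2 - γ) * z + (σ - 4)) := by
  constructor
  · intro h
    refine ⟨?_, ?_, ?_⟩
    · have := h 0 1 0 1 le_rfl zero_le_one le_rfl zero_le_one (by norm_num)
      linarith
    · have := h 1 0 1 0 zero_le_one le_rfl zero_le_one le_rfl (by norm_num)
      linarith
    · intro z hz
      have := h 0 (z + 1) (z ^ 2 + 2 * z) 1 le_rfl (by linarith) (by nlinarith)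
        zero_le_one (by nlinarith)
      nlinarith
  · rintro ⟨hσ, hγ, hq⟩ a b c d ha hb hc hd hab
    rcases eq_or_lt_of_le hd with hd0 | hd0
    · have : d = 0 := hd0.symm
      subst this
      nlinarith
    · set z := Real.sqrt (1 + c / d ^ 2) - 1 with hzdef
      have h1 : (0:ℝ) ≤ 1 + c / d ^ 2 := by positivity
      have hz : 0 ≤ z := by
        have hcd : (0:ℝ) ≤ c / d ^ 2 := by positivity
        show 0 ≤ Real.sqrt (1 + c / d ^ 2) - 1
        nlinarith [Real.sq_sqrt h1, Real.sqrt_nonneg (1 + c / d ^ 2)]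
      have hsq : (z + 1) ^ 2 = 1 + c / d ^ 2 := by
        have : z + 1 = Real.sqrt (1 + c / d ^ 2) := by rw [hzdef]; ring
        rw [this, Real.sq_sqrt h1]
      have hd2 : (0:ℝ) < d ^ 2 := by positivity
      have hc' : c = (z ^ 2 + 2 * z) * d ^ 2 := by
        field_simp at hsq
        nlinarith
      have hb' : b ≤ (z + 1) * d := by
        nlinarith [sq_nonneg (b - (z + 1) * d), mul_nonneg hz hd]
      have hq' := hq z hz
      nlinarith [mul_nonneg hq' hd2.le, mul_le_mul_of_nonneg_right hb' hd0.le]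
end
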